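/- arXiv:1708.02933 — 4 statements merged into one kernel-verified Lean document; each statement's English description precedes it below -/
import Mathlib

section
/- Let K be an algebraically closed field and let A, B, C be finite-dimensional associative K-algebras of the same dimension. Write B ≤ A if there exists a Gerstenhaber formal deformation X of B such that X ⊗_{K[[t]]} K((t)) is isomorphic to A ⊗_K K((t)) as K((t))-algebras. If C ≤ B and B ≤ A, then C ≤ A. -/
/-!
Statement 4: the relation `B ≤ A` ("there is a Gerstenhaber formal deformation `X` of `B`
with `X ⊗_{K[[t]]} K((t)) ≅ A ⊗_K K((t))`") is transitive on finite dimensional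
associative algebras over an algebraically closed field.
-/

open scoped TensorProduct

set_option maxHeartbeats 1000000
set_option synthInstance.maxHeartbeats 1000000

noncomputable section

universe u

/-- Base change of a bilinear multiplication on `M` along `R → S`. -/
def bcBil (R S M : Type*) [CommRing R] [CommRing S] [Algebra R S]
    [AddCommGroup M] [Module R M] (μ : M →ₗ[R] M →ₗ[R] M) :
    (S ⊗[R] M) →ₗ[S] (S ⊗[R] M) →ₗ[S] (S ⊗[R] M) :=
  TensorProduct.curry ((LinearMap.baseChange S (TensorProduct.lift μ)) ∘ₗ
    (TensorProduct.AlgebraTensorModule.distribBaseChange R S M M).symm.toLinearMap)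

/-- `K` as an algebra over `K[[t]]` via evaluation at `t = 0`. -/
def residueAlgebra (K : Type*) [Field K] : Algebra (PowerSeries K) K :=
  (PowerSeries.constantCoeff : PowerSeries K →+* K).toAlgebra

attribute [local instance] residueAlgebra

/-- `B ≤ A`: there exists a Gerstenhaber formal deformation `X` of `B` — an associative
`K[[t]]`-algebra, free of finite rank as a `K[[t]]`-module, with `X ⊗_{K[[t]]} K ≅ B` —
such that `X ⊗_{K[[t]]} K((t)) ≅ A ⊗_K K((t))` as `K((t))`-algebras. -/
def DegenerationLE (K U W : Type u) [Field K]
    [AddCommGroup U] [Module K U] [AddCommGroup W] [Module K W]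
    (A : U →ₗ[K] U →ₗ[K] U) (B : W →ₗ[K] W →ₗ[K] W) : Prop :=
  ∃ (X : Type u) (_ : AddCommGroup X) (_ : Module (PowerSeries K) X),
    Module.Free (PowerSeries K) X ∧ Module.Finite (PowerSeries K) X ∧
    ∃ μ : X →ₗ[PowerSeries K] X →ₗ[PowerSeries K] X,
      (∀ a b c, μ (μ a b) c = μ a (μ b c)) ∧
      (∃ e₀ : (K ⊗[PowerSeries K] X) ≃ₗ[K] W,
        ∀ a b, e₀ (bcBil (PowerSeries K) K X μ a b) = B (e₀ a) (e₀ b)) ∧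
      (∃ e : (FractionRing (PowerSeries K) ⊗[PowerSeries K] X)
               ≃ₗ[FractionRing (PowerSeries K)] (FractionRing (PowerSeries K) ⊗[K] U),
        ∀ a b, e (bcBil (PowerSeries K) (FractionRing (PowerSeries K)) X μ a b)
          = bcBil K (FractionRing (PowerSeries K)) U A (e a) (e b))

attribute [-instance] MvPowerSeries.instModule

namespace DegTrans

variable {S T : Type*} [CommRing S] [CommRing T] {n : ℕ}

/-- structure constants -/
abbrev SC (n : ℕ) (S : Type*) := Fin n → Fin n → Fin n → S

def mulv (c : SC n S) (x y : Fin n → S) : Fin n → S :=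
  fun l => ∑ i, ∑ j, c i j l * x i * y j

def mapSC (f : S →+* T) (c : SC n S) : SC n T := fun i j k => f (c i j k)

def mulMap (c : SC n S) : (Fin n → S) →ₗ[S] (Fin n → S) →ₗ[S] (Fin n → S) :=
  LinearMap.mk₂ S (mulv c)
    (fun x x' y => by
      funext l
      simp [mulv, add_mul, mul_add, Finset.sum_add_distrib])
    (fun s x y => by
      funext l
      simp only [mulv, Pi.smul_apply, smul_eq_mul, Finset.mul_sum]
      exact Finset.sum_congr rfl fun i _ => Finset.sum_congr rfl fun j _ => by ring)
    (fun x y y' => by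
      funext l
      simp [mulv, add_mul, mul_add, Finset.sum_add_distrib])
    (fun s x y => by
      funext l
      simp only [mulv, Pi.smul_apply, smul_eq_mul, Finset.mul_sum]
      exact Finset.sum_congr rfl fun i _ => Finset.sum_congr rfl fun j _ => by ring)

@[simp] lemma mulMap_apply (c : SC n S) (x y : Fin n → S) : mulMap c x y = mulv c x y := rfl

lemma mulv_map (f : S →+* T) (c : SC n S) (x y : Fin n → S) :
    mulv (mapSC f c) (f ∘ x) (f ∘ y) = f ∘ mulv c x y := by
  funext l
  simp [mulv, mapSC, map_sum, map_mul]

lemma mulv_single (c : SC n S) (p q : Fin n) :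
    mulv c (Pi.single p 1) (Pi.single q 1) = fun l => c p q l := by
  funext l
  simp [mulv, Pi.single_apply, mul_ite, ite_mul]

lemma mulv_single_right (c : SC n S) (x : Fin n → S) (r : Fin n) :
    mulv c x (Pi.single r 1) = fun l => ∑ i, c i r l * x i := by
  funext l
  simp [mulv, Pi.single_apply, mul_ite, ite_mul]

lemma mulv_single_left (c : SC n S) (y : Fin n → S) (p : Fin n) :
    mulv c (Pi.single p 1) y = fun l => ∑ j, c p j l * y j := by
  funext l
  simp [mulv, Pi.single_apply, mul_ite, ite_mul]

/-- entrywise associativity -/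
def AssocE (c : SC n S) : Prop :=
  ∀ p q r l, ∑ k, c p q k * c k r l = ∑ k, c q r k * c p k l

/-- functional associativity -/
def AssocF (c : SC n S) : Prop :=
  ∀ x y z, mulv c (mulv c x y) z = mulv c x (mulv c y z)

lemma AssocE.map (f : S →+* T) {c : SC n S} (h : AssocE c) : AssocE (mapSC f c) := by
  intro p q r l
  have := congrArg f (h p q r l)
  simpa [mapSC, map_sum, map_mul] using this

lemma assocE_iff_assocF (c : SC n S) : AssocE c ↔ AssocF c := by
  classical
  constructor
  · intro h
    have key : (LinearMap.compr₂ (mulMap c) (mulMap c) :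
          (Fin n → S) →ₗ[S] (Fin n → S) →ₗ[S] (Fin n → S) →ₗ[S] (Fin n → S)) =
        LinearMap.mk₂ S (fun x y => (mulMap c x) ∘ₗ (mulMap c y))
          (fun x x' y => by ext z; simp)
          (fun s x y => by ext z; simp)
          (fun x y y' => by ext z; simp [map_add])
          (fun s x y => by ext z; simp [map_smul]) := by
      apply LinearMap.ext_basis (Pi.basisFun S (Fin n)) (Pi.basisFun S (Fin n))
      intro p q
      apply Module.Basis.ext (Pi.basisFun S (Fin n))
      intro r
      simp only [LinearMap.compr₂_apply, Pi.basisFun_apply, LinearMap.mk₂_apply,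
        LinearMap.comp_apply, mulMap_apply]
      rw [mulv_single, show (fun l => c p q l) = mulv c (Pi.single p 1) (Pi.single q 1) from
        (mulv_single c p q).symm]
      rw [mulv_single c p q, mulv_single c q r, mulv_single_right, mulv_single_left]
      funext l
      calc ∑ i, c i r l * c p q i = ∑ k, c p q k * c k r l :=
            Finset.sum_congr rfl fun k _ => mul_comm _ _
        _ = ∑ k, c q r k * c p k l := h p q r l
        _ = ∑ j, c p j l * c q r j := Finset.sum_congr rfl fun k _ => mul_comm _ _
    intro x y z
    have := congrFun (congrArg (fun (f : (Fin n → S) →ₗ[S] (Fin n → S)) => f z)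
      (LinearMap.congr_fun (LinearMap.congr_fun key x) y))
    funext l
    simpa using this l
  · intro h p q r l
    have := congrFun (h (Pi.single p 1) (Pi.single q 1) (Pi.single r 1)) l
    rw [mulv_single c p q] at this
    rw [show mulv c (fun l => c p q l) (Pi.single r 1) = fun l => ∑ k, c k r l * c p q k from
      mulv_single_right c _ r] at this
    rw [show mulv c (Pi.single q 1) (Pi.single r 1) = fun l => c q r l from mulv_single c q r,
      show mulv c (Pi.single p 1) (fun l => c q r l) = fun l => ∑ k, c p k l * c q r k from
        mulv_single_left c _ p] at this
    calc ∑ k, c p q k * c k r l = ∑ k, c k r l * c p q k := by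
          exact Finset.sum_congr rfl fun k _ => mul_comm _ _
      _ = ∑ k, c p k l * c q r k := this
      _ = ∑ k, c q r k * c p k l := Finset.sum_congr rfl fun k _ => mul_comm _ _


open Matrix in
/-- entrywise intertwining relation: `H` carries the `c`-multiplication to the
`d`-multiplication. -/
def RelE (H : Matrix (Fin n) (Fin n) S) (c d : SC n S) : Prop :=
  ∀ p q l, ∑ k, H l k * c p q k = ∑ i, ∑ j, d i j l * H i p * H j q

open Matrix in
/-- functional intertwining relation -/
def RelF (H : Matrix (Fin n) (Fin n) S) (c d : SC n S) : Prop :=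
  ∀ x y, H *ᵥ mulv c x y = mulv d (H *ᵥ x) (H *ᵥ y)

section Rel

open Matrix

lemma RelE.map (f : S →+* T) {H : Matrix (Fin n) (Fin n) S} {c d : SC n S}
    (h : RelE H c d) : RelE (H.map f) (mapSC f c) (mapSC f d) := by
  intro p q l
  have := congrArg f (h p q l)
  simpa [mapSC, Matrix.map, map_sum, _root_.map_mul] using this

lemma mulVec_single_one (H : Matrix (Fin n) (Fin n) S) (p : Fin n) :
    H *ᵥ (Pi.single p 1) = fun i => H i p := by
  funext i
  simp [Matrix.mulVec, dotProduct, Pi.single_apply, mul_ite]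

lemma mulVec_apply' (H : Matrix (Fin n) (Fin n) S) (v : Fin n → S) (l : Fin n) :
    (H *ᵥ v) l = ∑ k, H l k * v k := by
  simp [Matrix.mulVec, dotProduct]

lemma relE_iff_relF (H : Matrix (Fin n) (Fin n) S) (c d : SC n S) :
    RelE H c d ↔ RelF H c d := by
  classical
  constructor
  · intro h
    have key : (LinearMap.compr₂ (mulMap c) (Matrix.mulVecLin H) :
          (Fin n → S) →ₗ[S] (Fin n → S) →ₗ[S] (Fin n → S)) =
        LinearMap.compl₁₂ (mulMap d) (Matrix.mulVecLin H) (Matrix.mulVecLin H) := by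
      apply LinearMap.ext_basis (Pi.basisFun S (Fin n)) (Pi.basisFun S (Fin n))
      intro p q
      funext l
      simp only [LinearMap.compr₂_apply, LinearMap.compl₁₂_apply, Pi.basisFun_apply,
        Matrix.mulVecLin_apply, mulMap_apply]
      rw [mulv_single, mulVec_single_one, mulVec_single_one, mulVec_apply', h p q l]
      simp [mulv]
    intro x y
    have := LinearMap.congr_fun (LinearMap.congr_fun key x) y
    simpa using this
  · intro h p q l
    have := congrFun (h (Pi.single p 1) (Pi.single q 1)) l
    rw [mulv_single, mulVec_single_one, mulVec_single_one, mulVec_apply'] at this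
    rw [this]
    simp [mulv]

/-- composing relations -/
lemma RelF.comp {H H' : Matrix (Fin n) (Fin n) S} {c d e : SC n S}
    (h : RelF H c d) (h' : RelF H' d e) : RelF (H' * H) c e := by
  intro x y
  rw [← Matrix.mulVec_mulVec, h, h', Matrix.mulVec_mulVec, Matrix.mulVec_mulVec]

/-- transporting associativity along an invertible relation -/
lemma AssocF.of_relF {H Hinv : Matrix (Fin n) (Fin n) S} {c d : SC n S}
    (hinv : Hinv * H = 1) (hrel : RelF H c d) (h : AssocF d) : AssocF c := by
  have hinj : ∀ u v : Fin n → S, H *ᵥ u = H *ᵥ v → u = v := by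
    intro u v huv
    have := congrArg (fun w => Hinv *ᵥ w) huv
    simpa [Matrix.mulVec_mulVec, hinv] using this
  intro x y z
  apply hinj
  rw [hrel, hrel, hrel, hrel, h]

/-- the unique SC carried by `H` to `d` (conjugation). -/
def actSC (H Hinv : Matrix (Fin n) (Fin n) S) (d : SC n S) : SC n S :=
  fun p q m => ∑ l, Hinv m l * (∑ i, ∑ j, d i j l * H i p * H j q)

lemma actSC_relE {H Hinv : Matrix (Fin n) (Fin n) S} (h1 : H * Hinv = 1) (d : SC n S) :
    RelE H (actSC H Hinv d) d := by
  intro p q l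
  unfold actSC
  set T : Fin n → S := fun m => ∑ i, ∑ j, d i j m * H i p * H j q with hT
  calc ∑ k, H l k * ∑ m, Hinv k m * T m
      = ∑ k, ∑ m, H l k * (Hinv k m * T m) := by
        exact Finset.sum_congr rfl fun k _ => Finset.mul_sum _ _ _
    _ = ∑ m, ∑ k, H l k * (Hinv k m * T m) := Finset.sum_comm
    _ = ∑ m, (∑ k, H l k * Hinv k m) * T m := by
        refine Finset.sum_congr rfl fun m _ => ?_
        rw [Finset.sum_mul]
        exact Finset.sum_congr rfl fun k _ => by ring
    _ = ∑ m, (1 : Matrix (Fin n) (Fin n) S) l m * T m := by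
        refine Finset.sum_congr rfl fun m _ => ?_
        congr 1
        have := congrFun (congrFun h1 l) m
        simpa [Matrix.mul_apply] using this
    _ = T l := by simp [Matrix.one_apply, ite_mul]

lemma actSC_unique {H Hinv : Matrix (Fin n) (Fin n) S} (h2 : Hinv * H = 1)
    {c d : SC n S} (hrel : RelE H c d) : c = actSC H Hinv d := by
  funext p q m
  unfold actSC
  calc c p q m = ∑ l, (1 : Matrix (Fin n) (Fin n) S) m l * c p q l := by
        simp [Matrix.one_apply, ite_mul]
    _ = ∑ l, (∑ k, Hinv m k * H k l) * c p q l := by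
        refine Finset.sum_congr rfl fun l _ => ?_
        congr 1
        have := congrFun (congrFun h2 m) l
        simpa [Matrix.mul_apply] using this.symm
    _ = ∑ l, ∑ k, Hinv m k * (H k l * c p q l) := by
        refine Finset.sum_congr rfl fun l _ => ?_
        rw [Finset.sum_mul]
        exact Finset.sum_congr rfl fun k _ => by ring
    _ = ∑ k, ∑ l, Hinv m k * (H k l * c p q l) := Finset.sum_comm
    _ = ∑ k, Hinv m k * (∑ l, H k l * c p q l) := by
        exact Finset.sum_congr rfl fun k _ => (Finset.mul_sum _ _ _).symm
    _ = ∑ l, Hinv m l * (∑ i, ∑ j, d i j l * H i p * H j q) := by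
        refine Finset.sum_congr rfl fun k _ => ?_
        rw [hrel p q k]

end Rel

section Bridge

open TensorProduct

variable (R S : Type*) [CommRing R] [CommRing S] [Algebra R S]
variable {M M₂ : Type*} [AddCommGroup M] [Module R M] [AddCommGroup M₂] [Module R M₂]

lemma bcBil_tmul (μ : M →ₗ[R] M →ₗ[R] M) (s s' : S) (m m' : M) :
    bcBil R S M μ (s ⊗ₜ[R] m) (s' ⊗ₜ[R] m') = (s * s') ⊗ₜ[R] (μ m m') := by
  simp [bcBil, TensorProduct.AlgebraTensorModule.distribBaseChange, smul_tmul',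
    mul_comm s s']

lemma bil_ext {P : Type*} [AddCommGroup P] [Module S P]
    {B₁ B₂ : (S ⊗[R] M) →ₗ[S] (S ⊗[R] M) →ₗ[S] P}
    (h : ∀ (s s' : S) (m m' : M), B₁ (s ⊗ₜ m) (s' ⊗ₜ m') = B₂ (s ⊗ₜ m) (s' ⊗ₜ m'))
    (a b : S ⊗[R] M) : B₁ a b = B₂ a b := by
  induction a using TensorProduct.induction_on with
  | zero => simp
  | tmul s m =>
    induction b using TensorProduct.induction_on with
    | zero => simp
    | tmul t m' => exact h ..
    | add u v hu hv => simp only [map_add, hu, hv]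
  | add u v hu hv => simp only [map_add, LinearMap.add_apply, hu, hv]

lemma bcBil_naturality (f : M ≃ₗ[R] M₂) (D : M →ₗ[R] M →ₗ[R] M)
    (D₂ : M₂ →ₗ[R] M₂ →ₗ[R] M₂)
    (hf : ∀ m m', f (D m m') = D₂ (f m) (f m')) (a b : S ⊗[R] M) :
    LinearEquiv.baseChange R S M M₂ f (bcBil R S M D a b)
      = bcBil R S M₂ D₂ (LinearEquiv.baseChange R S M M₂ f a)
        (LinearEquiv.baseChange R S M M₂ f b) := by
  have := bil_ext R S (M := M)
    (B₁ := (bcBil R S M D).compr₂ (LinearEquiv.baseChange R S M M₂ f).toLinearMap)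
    (B₂ := (bcBil R S M₂ D₂).compl₁₂ ((LinearEquiv.baseChange R S M M₂ f).toLinearMap)
      ((LinearEquiv.baseChange R S M M₂ f).toLinearMap)) ?_ a b
  · exact this
  · intro s s' m m'
    simp only [LinearMap.compr₂_apply, LinearMap.compl₁₂_apply, LinearEquiv.coe_coe,
      bcBil_tmul]
    have ht : ∀ (s : S) (m : M), LinearEquiv.baseChange R S M M₂ f (s ⊗ₜ[R] m) = s ⊗ₜ[R] f m := by
      intro s m; rfl
    rw [ht, ht, ht, bcBil_tmul, hf]

lemma piScalarRight_bcBil {n : ℕ} (c : SC n R) (a b : S ⊗[R] (Fin n → R)) :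
    TensorProduct.piScalarRight R S S (Fin n) (bcBil R S (Fin n → R) (mulMap c) a b) =
      mulv (mapSC (algebraMap R S) c)
        (TensorProduct.piScalarRight R S S (Fin n) a)
        (TensorProduct.piScalarRight R S S (Fin n) b) := by
  have := bil_ext R S (M := Fin n → R)
    (B₁ := (bcBil R S (Fin n → R) (mulMap c)).compr₂
      (TensorProduct.piScalarRight R S S (Fin n)).toLinearMap)
    (B₂ := (mulMap (mapSC (algebraMap R S) c)).compl₁₂
      (TensorProduct.piScalarRight R S S (Fin n)).toLinearMap
      (TensorProduct.piScalarRight R S S (Fin n)).toLinearMap) ?_ a b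
  · simpa using this
  · intro s s' x y
    simp only [LinearMap.compr₂_apply, LinearMap.compl₁₂_apply, LinearEquiv.coe_coe,
      bcBil_tmul, mulMap_apply, TensorProduct.piScalarRight_apply,
      TensorProduct.piScalarRightHom_tmul]
    funext l
    simp only [mulv, mapSC, Algebra.smul_def, map_sum, _root_.map_mul]
    rw [Finset.sum_mul]
    refine Finset.sum_congr rfl fun i _ => ?_
    rw [Finset.sum_mul]
    refine Finset.sum_congr rfl fun j _ => ?_
    ring

lemma bilin_eq_mulv {n : ℕ} (D : (Fin n → S) →ₗ[S] (Fin n → S) →ₗ[S] (Fin n → S))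
    (x y : Fin n → S) :
    D x y = mulv (fun i j k => D (Pi.single i 1) (Pi.single j 1) k) x y := by
  have key : D = mulMap (fun i j k => D (Pi.single i 1) (Pi.single j 1) k) := by
    apply LinearMap.ext_basis (Pi.basisFun S (Fin n)) (Pi.basisFun S (Fin n))
    intro i j
    simp only [Pi.basisFun_apply, mulMap_apply, mulv_single]
  conv_lhs => rw [key]
  rw [mulMap_apply]

/-- the canonical instances on `Fin n → S`, as elaborated in a context without
exotic instances -/
def stdACG (S : Type*) [CommRing S] (n : ℕ) : AddCommGroup (Fin n → S) := inferInstance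

def stdMod (S : Type*) [CommRing S] (n : ℕ) :
    @Module S (Fin n → S) _ (stdACG S n).toAddCommMonoid := by delta stdACG; infer_instance

lemma stdFree (S : Type*) [CommRing S] (n : ℕ) :
    @Module.Free S (Fin n → S) _ (stdACG S n).toAddCommMonoid (stdMod S n) := by
  delta stdACG stdMod; infer_instance

lemma stdFinite (S : Type*) [CommRing S] (n : ℕ) :
    @Module.Finite S (Fin n → S) _ (stdACG S n).toAddCommMonoid (stdMod S n) := by
  delta stdACG stdMod; infer_instance

end Bridge

open PowerSeries

variable {K : Type*} [Field K]

/-- substitution `t ↦ t^N` on power series, as a function -/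
def subPowFun (N : ℕ) (f : PowerSeries K) : PowerSeries K :=
  PowerSeries.mk fun m => if N ∣ m then PowerSeries.coeff (m / N) f else 0

lemma coeff_subPowFun (N : ℕ) (f : PowerSeries K) (m : ℕ) :
    coeff m (subPowFun N f) = if N ∣ m then coeff (m / N) f else 0 :=
  coeff_mk _ _

lemma subPowFun_mul {N : ℕ} (hN : 0 < N) (f g : PowerSeries K) :
    subPowFun N (f * g) = subPowFun N f * subPowFun N g := by
  classical
  ext m
  rw [coeff_subPowFun, coeff_mul]
  by_cases hm : N ∣ m
  · rw [if_pos hm, coeff_mul]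
    have hsub : ∑ p ∈ Finset.HasAntidiagonal.antidiagonal m,
        (coeff p.1) (subPowFun N f) * (coeff p.2) (subPowFun N g) =
        ∑ p ∈ (Finset.HasAntidiagonal.antidiagonal m).filter (fun p => N ∣ p.1 ∧ N ∣ p.2),
        (coeff p.1) (subPowFun N f) * (coeff p.2) (subPowFun N g) := by
      refine (Finset.sum_subset (Finset.filter_subset _ _) ?_).symm
      intro p hp hnp
      rw [Finset.mem_filter] at hnp
      simp only [hp, true_and] at hnp
      rw [coeff_subPowFun, coeff_subPowFun]
      by_cases h1 : N ∣ p.1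
      · rw [if_neg (fun h2 => hnp ⟨h1, h2⟩), mul_zero]
      · rw [if_neg h1, zero_mul]
    rw [hsub]
    refine Finset.sum_nbij' (fun p => (N * p.1, N * p.2)) (fun p => (p.1 / N, p.2 / N))
      ?_ ?_ ?_ ?_ ?_
    · intro p hp
      rw [Finset.HasAntidiagonal.mem_antidiagonal] at hp
      rw [Finset.mem_filter, Finset.HasAntidiagonal.mem_antidiagonal]
      exact ⟨by rw [← Nat.mul_add, hp, Nat.mul_div_cancel' hm], ⟨p.1, rfl⟩, ⟨p.2, rfl⟩⟩
    · intro p hp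
      rw [Finset.mem_filter, Finset.HasAntidiagonal.mem_antidiagonal] at hp
      rw [Finset.HasAntidiagonal.mem_antidiagonal]
      obtain ⟨hpm, ⟨a, ha⟩, ⟨b, hb⟩⟩ := hp
      obtain ⟨c, hc⟩ := hm
      dsimp only
      rw [ha, hb, hc, Nat.mul_div_cancel_left _ hN, Nat.mul_div_cancel_left _ hN,
        Nat.mul_div_cancel_left _ hN]
      refine Nat.eq_of_mul_eq_mul_left hN ?_
      rw [Nat.mul_add, ← ha, ← hb, ← hc]
      exact hpm
    · intro p hp
      simp [Nat.mul_div_cancel_left _ hN]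
    · intro p hp
      rw [Finset.mem_filter] at hp
      obtain ⟨-, ⟨a, ha⟩, ⟨b, hb⟩⟩ := hp
      dsimp only
      rw [ha, hb, Nat.mul_div_cancel_left _ hN, Nat.mul_div_cancel_left _ hN, ← ha, ← hb]
    · intro p hp
      rw [coeff_subPowFun, coeff_subPowFun, if_pos ⟨p.1, rfl⟩, if_pos ⟨p.2, rfl⟩,
        Nat.mul_div_cancel_left _ hN, Nat.mul_div_cancel_left _ hN]
  · rw [if_neg hm, coeff_mul]
    refine (Finset.sum_eq_zero fun p hp => ?_).symm
    rw [Finset.HasAntidiagonal.mem_antidiagonal] at hp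
    rw [coeff_subPowFun, coeff_subPowFun]
    by_cases h1 : N ∣ p.1
    · have h2 : ¬ N ∣ p.2 := fun h2 => hm (hp ▸ Nat.dvd_add h1 h2)
      rw [if_neg h2, mul_zero]
    · rw [if_neg h1, zero_mul]

/-- substitution `t ↦ t^N` on power series, as a ring homomorphism (for `0 < N`). -/
def subPow (N : ℕ) (hN : 0 < N) : PowerSeries K →+* PowerSeries K where
  toFun := subPowFun N
  map_one' := by
    ext m
    rw [coeff_subPowFun]
    by_cases h : N ∣ m
    · obtain ⟨c, rfl⟩ := h
      rw [if_pos (dvd_mul_right N c), Nat.mul_div_cancel_left _ hN, coeff_one, coeff_one]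
      by_cases hc : c = 0
      · subst hc; simp
      · rw [if_neg hc, if_neg (Nat.mul_ne_zero (by omega) hc)]
    · rw [if_neg h, coeff_one, if_neg (by rintro rfl; exact h (dvd_zero N))]
  map_mul' := subPowFun_mul hN
  map_zero' := by
    ext m
    rw [coeff_subPowFun]
    simp
  map_add' := fun f g => by
    ext m
    rw [coeff_subPowFun]
    simp only [map_add, coeff_subPowFun]
    by_cases h : N ∣ m
    · rw [if_pos h, if_pos h, if_pos h]
    · rw [if_neg h, if_neg h, if_neg h, add_zero]

lemma coeff_subPow {N : ℕ} (hN : 0 < N) (f : PowerSeries K) (m : ℕ) :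
    coeff m (subPow N hN f) = if N ∣ m then coeff (m / N) f else 0 :=
  coeff_subPowFun N f m

lemma subPow_C {N : ℕ} (hN : 0 < N) (r : K) : subPow N hN (C r) = C r := by
  ext m
  rw [coeff_subPow hN]
  by_cases h : N ∣ m
  · obtain ⟨c, rfl⟩ := h
    rw [if_pos (dvd_mul_right N c), Nat.mul_div_cancel_left _ hN, coeff_C, coeff_C]
    by_cases hc : c = 0
    · subst hc; simp
    · rw [if_neg hc, if_neg (Nat.mul_ne_zero (by omega) hc)]
  · rw [if_neg h, coeff_C, if_neg (by rintro rfl; exact h (dvd_zero N))]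

lemma subPow_X {N : ℕ} (hN : 0 < N) : subPow N hN (X : PowerSeries K) = X ^ N := by
  ext m
  rw [coeff_subPow hN]
  by_cases h : N ∣ m
  · obtain ⟨c, rfl⟩ := h
    rw [if_pos (dvd_mul_right N c), Nat.mul_div_cancel_left _ hN, coeff_X, coeff_X_pow]
    by_cases hc : c = 1
    · subst hc; rw [if_pos rfl, if_pos (by omega)]
    · rw [if_neg hc, if_neg (fun hE => hc (Nat.eq_of_mul_eq_mul_left hN (by omega)))]
  · rw [if_neg h, coeff_X_pow, if_neg (by rintro rfl; exact h (dvd_refl _))]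

lemma constantCoeff_subPow {N : ℕ} (hN : 0 < N) (f : PowerSeries K) :
    constantCoeff (subPow N hN f) = constantCoeff f := by
  rw [← coeff_zero_eq_constantCoeff, coeff_subPow hN, if_pos (dvd_zero N), Nat.zero_div]

lemma subPow_injective {N : ℕ} (hN : 0 < N) :
    Function.Injective (subPow (K := K) N hN) := by
  intro f g h
  ext m
  have := congrArg (coeff (N * m)) h
  rw [coeff_subPow hN, coeff_subPow hN, if_pos ⟨m, rfl⟩, if_pos ⟨m, rfl⟩,
    Nat.mul_div_cancel_left _ hN] at this
  exact this


section Frac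

variable (K : Type*) [Field K]

lemma exists_X_pow_mul_mem (x : FractionRing (PowerSeries K)) :
    ∃ (m : ℕ) (r : PowerSeries K),
      algebraMap (PowerSeries K) (FractionRing (PowerSeries K)) (X ^ m) * x
        = algebraMap (PowerSeries K) (FractionRing (PowerSeries K)) r := by
  obtain ⟨p, q, hq, hx⟩ := IsFractionRing.div_surjective (A := PowerSeries K) x
  have hq0 : q ≠ 0 := nonZeroDivisors.ne_zero hq
  set d := q.order.toNat with hd
  have hfac : X ^ d * divXPowOrder q = q :=
    X_pow_order_mul_divXPowOrder
  set u := divXPowOrder q with hu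
  set w := Inv_divided_by_X_pow_order hq0 with hw
  have huw : u * w = 1 := Inv_divided_by_X_pow_order_rightInv hq0
  refine ⟨d, p * w, ?_⟩
  have hqF : algebraMap (PowerSeries K) (FractionRing (PowerSeries K)) q ≠ 0 :=
    fun h => hq0 (IsFractionRing.to_map_eq_zero_iff.mp h)
  rw [← hx, mul_div_assoc', div_eq_iff hqF, ← map_mul, ← map_mul]
  congr 1
  rw [← hfac]
  linear_combination (-(p * X ^ d)) * huw

/-- extension of `t ↦ t^N` to the Laurent field -/
def sigma (N : ℕ) (hN : 0 < N) :
    FractionRing (PowerSeries K) →+* FractionRing (PowerSeries K) :=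
  IsFractionRing.lift
    (g := (algebraMap (PowerSeries K) (FractionRing (PowerSeries K))).comp (subPow N hN))
    ((IsFractionRing.injective (PowerSeries K) (FractionRing (PowerSeries K))).comp
      (subPow_injective hN))

lemma sigma_algebraMap {N : ℕ} (hN : 0 < N) (r : PowerSeries K) :
    sigma K N hN (algebraMap (PowerSeries K) (FractionRing (PowerSeries K)) r)
      = algebraMap (PowerSeries K) (FractionRing (PowerSeries K)) (subPow N hN r) :=
  IsFractionRing.lift_algebraMap _ _

lemma sigma_algebraMap_K {N : ℕ} (hN : 0 < N) (x : K) :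
    sigma K N hN (algebraMap K (FractionRing (PowerSeries K)) x)
      = algebraMap K (FractionRing (PowerSeries K)) x := by
  rw [IsScalarTower.algebraMap_apply K (PowerSeries K) (FractionRing (PowerSeries K)),
    sigma_algebraMap, show algebraMap K (PowerSeries K) x = C x from rfl, subPow_C,
    ← show algebraMap K (PowerSeries K) x = C x from rfl,
    ← IsScalarTower.algebraMap_apply K (PowerSeries K) (FractionRing (PowerSeries K))]

end Frac

section Codec

open TensorProduct PowerSeries

variable {K U W : Type u} [Field K]
variable [AddCommGroup U] [Module K U] [AddCommGroup W] [Module K W]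

lemma decode {A : U →ₗ[K] U →ₗ[K] U} {C : W →ₗ[K] W →ₗ[K] W}
    (h : DegenerationLE K U W A C) {n : ℕ} (hn : Module.finrank K W = n) :
    ∃ c : SC n (PowerSeries K),
      AssocF c ∧
      (∃ E₀ : (Fin n → K) ≃ₗ[K] W,
        ∀ x y, E₀ (mulv (mapSC (algebraMap (PowerSeries K) K) c) x y) = C (E₀ x) (E₀ y)) ∧
      (∃ E : (Fin n → FractionRing (PowerSeries K)) ≃ₗ[FractionRing (PowerSeries K)]
          (FractionRing (PowerSeries K) ⊗[K] U),
        ∀ x y, E (mulv (mapSC (algebraMap (PowerSeries K) (FractionRing (PowerSeries K))) c) x y)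
          = bcBil K (FractionRing (PowerSeries K)) U A (E x) (E y)) := by
  classical
  obtain ⟨X, _, _, hfree, hfin, μ, hassoc, ⟨e₀, he₀⟩, ⟨e, he⟩⟩ := h
  let b0 := Module.Free.chooseBasis (PowerSeries K) X
  have hcard : Fintype.card (Module.Free.ChooseBasisIndex (PowerSeries K) X) = n := by
    have h1 : Module.finrank K (K ⊗[PowerSeries K] X)
        = Fintype.card (Module.Free.ChooseBasisIndex (PowerSeries K) X) :=
      Module.finrank_eq_card_basis (b0.baseChange K)
    have h2 : Module.finrank K (K ⊗[PowerSeries K] X) = Module.finrank K W := e₀.finrank_eq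
    rw [← h1, h2, hn]
  let p := (b0.reindex (Fintype.equivFinOfCardEq hcard)).equivFun
  set c : SC n (PowerSeries K) :=
    fun i j k => p (μ (p.symm (Pi.single i 1)) (p.symm (Pi.single j 1))) k with hcdef
  have hμ : ∀ u v, p (μ u v) = mulv c (p u) (p v) := by
    intro u v
    have hD := bilin_eq_mulv (S := PowerSeries K)
      (LinearMap.compr₂ (μ.compl₁₂ p.symm.toLinearMap p.symm.toLinearMap) p.toLinearMap)
      (p u) (p v)
    simp only [LinearMap.compr₂_apply, LinearMap.compl₁₂_apply, LinearEquiv.coe_coe,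
      p.symm_apply_apply] at hD
    exact hD
  have hf : ∀ m m', p.symm (mulMap c m m') = μ (p.symm m) (p.symm m') := by
    intro m m'
    rw [LinearEquiv.symm_apply_eq, hμ, p.apply_symm_apply, p.apply_symm_apply, mulMap_apply]
  refine ⟨c, ?_, ?_, ?_⟩
  · intro x y z
    obtain ⟨u, rfl⟩ : ∃ u, p u = x := ⟨p.symm x, p.apply_symm_apply x⟩
    obtain ⟨v, rfl⟩ : ∃ v, p v = y := ⟨p.symm y, p.apply_symm_apply y⟩
    obtain ⟨w, rfl⟩ : ∃ w, p w = z := ⟨p.symm z, p.apply_symm_apply z⟩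
    calc mulv c (mulv c (p u) (p v)) (p w)
        = mulv c (p (μ u v)) (p w) := by rw [hμ]
      _ = p (μ (μ u v) w) := (hμ _ _).symm
      _ = p (μ u (μ v w)) := by rw [hassoc]
      _ = mulv c (p u) (p (μ v w)) := hμ _ _
      _ = mulv c (p u) (mulv c (p v) (p w)) := by rw [hμ]
  · refine ⟨(((TensorProduct.piScalarRight (PowerSeries K) K K (Fin n)).symm.trans
      (LinearEquiv.baseChange (PowerSeries K) K _ _ p.symm)).trans e₀), fun x y => ?_⟩
    simp only [LinearEquiv.trans_apply]
    have h1 := piScalarRight_bcBil (PowerSeries K) K c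
      ((TensorProduct.piScalarRight (PowerSeries K) K K (Fin n)).symm x)
      ((TensorProduct.piScalarRight (PowerSeries K) K K (Fin n)).symm y)
    rw [LinearEquiv.apply_symm_apply, LinearEquiv.apply_symm_apply] at h1
    rw [← h1, LinearEquiv.symm_apply_apply, bcBil_naturality (PowerSeries K) K p.symm
      (mulMap c) μ hf, he₀]
  · refine ⟨(((TensorProduct.piScalarRight (PowerSeries K) (FractionRing (PowerSeries K))
      (FractionRing (PowerSeries K)) (Fin n)).symm.trans
      (LinearEquiv.baseChange (PowerSeries K) (FractionRing (PowerSeries K)) _ _ p.symm)).trans e),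
      fun x y => ?_⟩
    simp only [LinearEquiv.trans_apply]
    have h1 := piScalarRight_bcBil (PowerSeries K) (FractionRing (PowerSeries K)) c
      ((TensorProduct.piScalarRight (PowerSeries K) (FractionRing (PowerSeries K))
        (FractionRing (PowerSeries K)) (Fin n)).symm x)
      ((TensorProduct.piScalarRight (PowerSeries K) (FractionRing (PowerSeries K))
        (FractionRing (PowerSeries K)) (Fin n)).symm y)
    rw [LinearEquiv.apply_symm_apply, LinearEquiv.apply_symm_apply] at h1
    rw [← h1, LinearEquiv.symm_apply_apply, bcBil_naturality (PowerSeries K)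
      (FractionRing (PowerSeries K)) p.symm (mulMap c) μ hf, he]

lemma encode {A : U →ₗ[K] U →ₗ[K] U} {C : W →ₗ[K] W →ₗ[K] W} {n : ℕ}
    (c : SC n (PowerSeries K)) (hassoc : AssocF c)
    (h₀ : ∃ E₀ : (Fin n → K) ≃ₗ[K] W,
        ∀ x y, E₀ (mulv (mapSC (algebraMap (PowerSeries K) K) c) x y) = C (E₀ x) (E₀ y))
    (hF : ∃ E : (Fin n → FractionRing (PowerSeries K)) ≃ₗ[FractionRing (PowerSeries K)]
          (FractionRing (PowerSeries K) ⊗[K] U),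
        ∀ x y, E (mulv (mapSC (algebraMap (PowerSeries K) (FractionRing (PowerSeries K))) c) x y)
          = bcBil K (FractionRing (PowerSeries K)) U A (E x) (E y)) :
    DegenerationLE K U W A C := by
  classical
  obtain ⟨E₀, hE₀⟩ := h₀
  obtain ⟨E, hE⟩ := hF
  refine ⟨Fin n → PowerSeries K, stdACG _ _, stdMod _ _, stdFree _ _, stdFinite _ _,
    mulMap c, ?_, ?_, ?_⟩
  · intro a b d
    have := hassoc a b d
    exact this
  · refine ⟨(TensorProduct.piScalarRight (PowerSeries K) K K (Fin n)).trans E₀, fun a b => ?_⟩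
    exact (congrArg E₀ (piScalarRight_bcBil _ _ c a b)).trans (hE₀ _ _)
  · refine ⟨(TensorProduct.piScalarRight (PowerSeries K) (FractionRing (PowerSeries K))
      (FractionRing (PowerSeries K)) (Fin n)).trans E, fun a b => ?_⟩
    exact (congrArg E (piScalarRight_bcBil _ _ c a b)).trans (hE _ _)

end Codec

section MainHelpers

open TensorProduct PowerSeries

variable {K : Type u} [Field K]

/-- generic bridge: a deformation coordinatized by `p` base-changes to the standard model. -/
lemma bridge_generic (R S : Type*) [CommRing R] [CommRing S] [Algebra R S]
    {X : Type*} [AddCommGroup X] [Module R X] {n : ℕ}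
    (μ : X →ₗ[R] X →ₗ[R] X) (p : X ≃ₗ[R] (Fin n → R)) :
    ∃ J : (Fin n → S) ≃ₗ[S] S ⊗[R] X,
      ∀ x y, J (mulv (mapSC (algebraMap R S)
          (fun i j k => p (μ (p.symm (Pi.single i 1)) (p.symm (Pi.single j 1))) k)) x y)
        = bcBil R S X μ (J x) (J y) := by
  classical
  set c : SC n R :=
    fun i j k => p (μ (p.symm (Pi.single i 1)) (p.symm (Pi.single j 1))) k with hcdef
  have hμ : ∀ u v, p (μ u v) = mulv c (p u) (p v) := by
    intro u v
    have hD := bilin_eq_mulv (S := R)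
      (LinearMap.compr₂ (μ.compl₁₂ p.symm.toLinearMap p.symm.toLinearMap) p.toLinearMap)
      (p u) (p v)
    simp only [LinearMap.compr₂_apply, LinearMap.compl₁₂_apply, LinearEquiv.coe_coe,
      p.symm_apply_apply] at hD
    exact hD
  have hf : ∀ m m', p.symm (mulMap c m m') = μ (p.symm m) (p.symm m') := by
    intro m m'
    rw [LinearEquiv.symm_apply_eq, hμ, p.apply_symm_apply, p.apply_symm_apply, mulMap_apply]
  refine ⟨(TensorProduct.piScalarRight R S S (Fin n)).symm.trans
    (LinearEquiv.baseChange R S _ _ p.symm), fun x y => ?_⟩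
  simp only [LinearEquiv.trans_apply]
  have h1 := piScalarRight_bcBil R S c
    ((TensorProduct.piScalarRight R S S (Fin n)).symm x)
    ((TensorProduct.piScalarRight R S S (Fin n)).symm y)
  rw [LinearEquiv.apply_symm_apply, LinearEquiv.apply_symm_apply] at h1
  rw [← h1, LinearEquiv.symm_apply_apply, bcBil_naturality R S p.symm (mulMap c) μ hf]

/-- composing two coordinatizations of the same bilinear structure -/
lemma transfer {n : ℕ} {S T : Type*} [CommRing S] [AddCommGroup T] [Module S T]
    (c d : SC n S) (P Q : (Fin n → S) ≃ₗ[S] T) (D : T → T → T)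
    (hP : ∀ x y, P (mulv c x y) = D (P x) (P y))
    (hQ : ∀ x y, Q (mulv d x y) = D (Q x) (Q y)) (x y : Fin n → S) :
    (P.trans Q.symm) (mulv c x y) = mulv d ((P.trans Q.symm) x) ((P.trans Q.symm) y) := by
  simp only [LinearEquiv.trans_apply]
  rw [hP, LinearEquiv.symm_apply_eq, hQ, Q.apply_symm_apply, Q.apply_symm_apply]

lemma exists_sum_X {α : Type*} (t : Finset α) (f : α → FractionRing (PowerSeries K))
    (h : ∀ a ∈ t, ∃ s : PowerSeries K,
      f a = algebraMap (PowerSeries K) (FractionRing (PowerSeries K)) (X * s)) :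
    ∃ s : PowerSeries K, ∑ a ∈ t, f a
      = algebraMap (PowerSeries K) (FractionRing (PowerSeries K)) (X * s) := by
  classical
  choose! sf hs using h
  refine ⟨∑ a ∈ t, sf a, ?_⟩
  rw [Finset.mul_sum, map_sum]
  exact Finset.sum_congr rfl hs

lemma pad_denom {m k : ℕ} {x : FractionRing (PowerSeries K)} {r : PowerSeries K}
    (h : algebraMap (PowerSeries K) (FractionRing (PowerSeries K)) (X ^ m) * x
      = algebraMap (PowerSeries K) (FractionRing (PowerSeries K)) r) :
    algebraMap (PowerSeries K) (FractionRing (PowerSeries K)) (X ^ (m + k)) * x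
      = algebraMap (PowerSeries K) (FractionRing (PowerSeries K)) (X ^ k * r) := by
  rw [pow_add, mul_comm (X ^ m) (X ^ k), _root_.map_mul, mul_assoc, h, _root_.map_mul]

end MainHelpers

end DegTrans

open Matrix in
theorem degenerationLE_trans
    (K U V W : Type u) [Field K] [IsAlgClosed K]
    [AddCommGroup U] [Module K U] [FiniteDimensional K U]
    [AddCommGroup V] [Module K V] [FiniteDimensional K V]
    [AddCommGroup W] [Module K W] [FiniteDimensional K W]
    (hdimUV : Module.finrank K U = Module.finrank K V)
    (hdimVW : Module.finrank K V = Module.finrank K W)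
    (A : U →ₗ[K] U →ₗ[K] U) (B : V →ₗ[K] V →ₗ[K] V) (C : W →ₗ[K] W →ₗ[K] W)
    (hA : ∀ u v w : U, A (A u v) w = A u (A v w))
    (hB : ∀ u v w : V, B (B u v) w = B u (B v w))
    (hC : ∀ u v w : W, C (C u v) w = C u (C v w))
    (hCB : DegenerationLE K V W B C) (hBA : DegenerationLE K U V A B) :
    DegenerationLE K U W A C := by
  classical
  -- decode both degenerations with n = dim V
  obtain ⟨c₁, hA₁, ⟨E₀₁, hE₀₁⟩, ⟨E₁, hE₁⟩⟩ := DegTrans.decode hCB hdimVW.symm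
  obtain ⟨c₂, hA₂, ⟨E₀₂, hE₀₂⟩, ⟨E₂, hE₂⟩⟩ := DegTrans.decode hBA rfl
  set b : DegTrans.SC (Module.finrank K V) K :=
    DegTrans.mapSC (algebraMap (PowerSeries K) K) c₂ with hb
  -- bridge for V via the special fibre of c₂
  obtain ⟨JV, hJV⟩ := DegTrans.bridge_generic K (FractionRing (PowerSeries K)) B E₀₂.symm
  have hbV : (fun i j k => E₀₂.symm (B (E₀₂.symm.symm (Pi.single i 1))
      (E₀₂.symm.symm (Pi.single j 1))) k) = b := by
    funext i j k
    rw [LinearEquiv.symm_symm, ← hE₀₂, LinearEquiv.symm_apply_apply, DegTrans.mulv_single]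
  rw [hbV] at hJV
  -- bridge for U via a chosen basis
  set qU := (Module.finBasisOfFinrankEq K U hdimUV).equivFun with hqU
  obtain ⟨JU, hJU⟩ := DegTrans.bridge_generic K (FractionRing (PowerSeries K)) A qU
  set a : DegTrans.SC (Module.finrank K V) K :=
    (fun i j k => qU (A (qU.symm (Pi.single i 1)) (qU.symm (Pi.single j 1))) k) with ha
  -- the two comparison equivalences on coordinates over the Laurent field
  set G := E₁.trans JV.symm with hGdef
  have hG : ∀ x y, G (DegTrans.mulv (DegTrans.mapSC
      (algebraMap (PowerSeries K) (FractionRing (PowerSeries K))) c₁) x y)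
      = DegTrans.mulv (DegTrans.mapSC (algebraMap K (FractionRing (PowerSeries K))) b)
        (G x) (G y) :=
    DegTrans.transfer _ _ E₁ JV (fun u v => bcBil K (FractionRing (PowerSeries K)) V B u v) hE₁ hJV
  set H := E₂.trans JU.symm with hHdef
  have hH : ∀ x y, H (DegTrans.mulv (DegTrans.mapSC
      (algebraMap (PowerSeries K) (FractionRing (PowerSeries K))) c₂) x y)
      = DegTrans.mulv (DegTrans.mapSC (algebraMap K (FractionRing (PowerSeries K))) a)
        (H x) (H y) :=
    DegTrans.transfer _ _ E₂ JU (fun u v => bcBil K (FractionRing (PowerSeries K)) U A u v) hE₂ hJU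
  -- matrices of G and H
  set Gm := LinearMap.toMatrix' G.toLinearMap with hGmdef
  set Gi := LinearMap.toMatrix' G.symm.toLinearMap with hGidef
  set Hm := LinearMap.toMatrix' H.toLinearMap with hHmdef
  set Hi := LinearMap.toMatrix' H.symm.toLinearMap with hHidef
  have hGm : ∀ z, Gm *ᵥ z = G z := by
    intro z
    rw [← Matrix.toLin'_apply, hGmdef, Matrix.toLin'_toMatrix']
    rfl
  have hHm : ∀ z, Hm *ᵥ z = H z := by
    intro z
    rw [← Matrix.toLin'_apply, hHmdef, Matrix.toLin'_toMatrix']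
    rfl
  have hGmGi : Gm * Gi = 1 := by
    rw [hGmdef, hGidef, ← LinearMap.toMatrix'_comp,
      show G.toLinearMap ∘ₗ G.symm.toLinearMap = LinearMap.id from by ext z; simp,
      LinearMap.toMatrix'_id]
  have hGiGm : Gi * Gm = 1 := by
    rw [hGmdef, hGidef, ← LinearMap.toMatrix'_comp,
      show G.symm.toLinearMap ∘ₗ G.toLinearMap = LinearMap.id from by ext z; simp,
      LinearMap.toMatrix'_id]
  have hHmHi : Hm * Hi = 1 := by
    rw [hHmdef, hHidef, ← LinearMap.toMatrix'_comp,
      show H.toLinearMap ∘ₗ H.symm.toLinearMap = LinearMap.id from by ext z; simp,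
      LinearMap.toMatrix'_id]
  have hHiHm : Hi * Hm = 1 := by
    rw [hHmdef, hHidef, ← LinearMap.toMatrix'_comp,
      show H.symm.toLinearMap ∘ₗ H.toLinearMap = LinearMap.id from by ext z; simp,
      LinearMap.toMatrix'_id]
  have hRelG : DegTrans.RelF Gm
      (DegTrans.mapSC (algebraMap (PowerSeries K) (FractionRing (PowerSeries K))) c₁)
      (DegTrans.mapSC (algebraMap K (FractionRing (PowerSeries K))) b) := by
    intro x y
    rw [hGm, hGm, hGm, hG]
  have hRelH : DegTrans.RelF Hm
      (DegTrans.mapSC (algebraMap (PowerSeries K) (FractionRing (PowerSeries K))) c₂)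
      (DegTrans.mapSC (algebraMap K (FractionRing (PowerSeries K))) a) := by
    intro x y
    rw [hHm, hHm, hHm, hH]
  -- common denominator for the entries of Gm and Gi
  have hden : ∀ i j, ∃ m : ℕ,
      (∃ r, algebraMap (PowerSeries K) (FractionRing (PowerSeries K)) (PowerSeries.X ^ m) * Gm i j
        = algebraMap (PowerSeries K) (FractionRing (PowerSeries K)) r) ∧
      (∃ r, algebraMap (PowerSeries K) (FractionRing (PowerSeries K)) (PowerSeries.X ^ m) * Gi i j
        = algebraMap (PowerSeries K) (FractionRing (PowerSeries K)) r) := by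
    intro i j
    obtain ⟨m1, r1, h1⟩ := DegTrans.exists_X_pow_mul_mem K (Gm i j)
    obtain ⟨m2, r2, h2⟩ := DegTrans.exists_X_pow_mul_mem K (Gi i j)
    exact ⟨m1 + m2, ⟨PowerSeries.X ^ m2 * r1, DegTrans.pad_denom h1⟩,
      ⟨PowerSeries.X ^ m1 * r2, by rw [Nat.add_comm]; exact DegTrans.pad_denom h2⟩⟩
  choose mf hmf using hden
  set M0 := Finset.univ.sup (fun i : Fin (Module.finrank K V) =>
    Finset.univ.sup (fun j : Fin (Module.finrank K V) => mf i j)) with hM0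
  have hM0le : ∀ i j, mf i j ≤ M0 := by
    intro i j
    refine le_trans (Finset.le_sup (Finset.mem_univ j)) ?_
    exact Finset.le_sup (f := fun i => Finset.univ.sup (fun j => mf i j)) (Finset.mem_univ i)
  have hGmd : ∀ i j, ∃ r,
      algebraMap (PowerSeries K) (FractionRing (PowerSeries K)) (PowerSeries.X ^ M0) * Gm i j
        = algebraMap (PowerSeries K) (FractionRing (PowerSeries K)) r := by
    intro i j
    obtain ⟨r, hr⟩ := (hmf i j).1
    have h2 := DegTrans.pad_denom (k := M0 - mf i j) hr
    rw [Nat.add_sub_cancel' (hM0le i j)] at h2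
    exact ⟨_, h2⟩
  have hGid : ∀ i j, ∃ r,
      algebraMap (PowerSeries K) (FractionRing (PowerSeries K)) (PowerSeries.X ^ M0) * Gi i j
        = algebraMap (PowerSeries K) (FractionRing (PowerSeries K)) r := by
    intro i j
    obtain ⟨r, hr⟩ := (hmf i j).2
    have h2 := DegTrans.pad_denom (k := M0 - mf i j) hr
    rw [Nat.add_sub_cancel' (hM0le i j)] at h2
    exact ⟨_, h2⟩
  -- substitution exponent
  have hN : 0 < 3 * M0 + 1 := Nat.succ_pos _
  set cc : DegTrans.SC (Module.finrank K V) (FractionRing (PowerSeries K)) :=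
    DegTrans.mapSC ((algebraMap (PowerSeries K) (FractionRing (PowerSeries K))).comp
      (DegTrans.subPow (3 * M0 + 1) hN)) c₂ with hcc
  have hccσ : DegTrans.mapSC (DegTrans.sigma K (3 * M0 + 1) hN)
      (DegTrans.mapSC (algebraMap (PowerSeries K) (FractionRing (PowerSeries K))) c₂) = cc := by
    funext i j k
    simp only [DegTrans.mapSC, hcc, RingHom.comp_apply]
    rw [DegTrans.sigma_algebraMap]
  have haσ : DegTrans.mapSC (DegTrans.sigma K (3 * M0 + 1) hN)
      (DegTrans.mapSC (algebraMap K (FractionRing (PowerSeries K))) a)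
      = DegTrans.mapSC (algebraMap K (FractionRing (PowerSeries K))) a := by
    funext i j k
    simp only [DegTrans.mapSC]
    rw [DegTrans.sigma_algebraMap_K]
  have hRelHσ : DegTrans.RelE (Hm.map (DegTrans.sigma K (3 * M0 + 1) hN)) cc
      (DegTrans.mapSC (algebraMap K (FractionRing (PowerSeries K))) a) := by
    have h0 := ((DegTrans.relE_iff_relF _ _ _).mpr hRelH).map (DegTrans.sigma K (3 * M0 + 1) hN)
    rwa [hccσ, haσ] at h0
  have hRelHσF := (DegTrans.relE_iff_relF _ _ _).mp hRelHσ
  -- the conjugated substituted family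
  set D := DegTrans.actSC Gm Gi cc with hD
  have hrelD : DegTrans.RelE Gm D cc := DegTrans.actSC_relE hGmGi cc
  have hActb : DegTrans.mapSC
      (algebraMap (PowerSeries K) (FractionRing (PowerSeries K))) c₁
      = DegTrans.actSC Gm Gi
        (DegTrans.mapSC (algebraMap K (FractionRing (PowerSeries K))) b) :=
    DegTrans.actSC_unique hGiGm ((DegTrans.relE_iff_relF _ _ _).mpr hRelG)
  -- coefficientwise analysis
  have hg : ∀ i j k, ∃ g, c₂ i j k = PowerSeries.C (b i j k) + PowerSeries.X * g := by
    intro i j k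
    have h0 : PowerSeries.constantCoeff (c₂ i j k - PowerSeries.C (b i j k)) = 0 := by
      rw [map_sub, PowerSeries.constantCoeff_C, hb]
      show _ - algebraMap (PowerSeries K) K (c₂ i j k) = 0
      rw [show algebraMap (PowerSeries K) K (c₂ i j k)
        = PowerSeries.constantCoeff (c₂ i j k) from rfl, sub_self]
    obtain ⟨g, hg0⟩ := PowerSeries.X_dvd_iff.mpr h0
    exact ⟨g, by linear_combination hg0⟩
  choose g hgdef using hg
  have hdiff : ∀ i j k, cc i j k
      - DegTrans.mapSC (algebraMap K (FractionRing (PowerSeries K))) b i j k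
      = algebraMap (PowerSeries K) (FractionRing (PowerSeries K))
        (PowerSeries.X ^ (3 * M0 + 1) * DegTrans.subPow (3 * M0 + 1) hN (g i j k)) := by
    intro i j k
    have h1 : DegTrans.subPow (3 * M0 + 1) hN (c₂ i j k)
        = PowerSeries.C (b i j k)
          + PowerSeries.X ^ (3 * M0 + 1) * DegTrans.subPow (3 * M0 + 1) hN (g i j k) := by
      conv_lhs => rw [hgdef i j k]
      rw [map_add, _root_.map_mul, DegTrans.subPow_C, DegTrans.subPow_X]
    have h2 : cc i j k = algebraMap (PowerSeries K) (FractionRing (PowerSeries K))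
        (DegTrans.subPow (3 * M0 + 1) hN (c₂ i j k)) := rfl
    have h3 : DegTrans.mapSC (algebraMap K (FractionRing (PowerSeries K))) b i j k
        = algebraMap (PowerSeries K) (FractionRing (PowerSeries K))
          (PowerSeries.C (b i j k)) := by
      show algebraMap K (FractionRing (PowerSeries K)) (b i j k) = _
      rw [IsScalarTower.algebraMap_apply K (PowerSeries K) (FractionRing (PowerSeries K))]
      rfl
    rw [h2, h3, h1, map_add, add_sub_cancel_left]
  -- the corrected structure constants live over the power series ring
  have hexist : ∀ p q m, ∃ s, D p q m
      = algebraMap (PowerSeries K) (FractionRing (PowerSeries K)) (c₁ p q m + PowerSeries.X * s) := by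
    intro p q m
    have hformula : D p q m - DegTrans.mapSC
        (algebraMap (PowerSeries K) (FractionRing (PowerSeries K))) c₁ p q m
        = ∑ l, ∑ i, ∑ j, Gi m l * ((cc i j l
            - DegTrans.mapSC (algebraMap K (FractionRing (PowerSeries K))) b i j l)
            * Gm i p * Gm j q) := by
      rw [hActb]
      show (∑ l, Gi m l * (∑ i, ∑ j, cc i j l * Gm i p * Gm j q))
          - (∑ l, Gi m l * (∑ i, ∑ j, DegTrans.mapSC
              (algebraMap K (FractionRing (PowerSeries K))) b i j l * Gm i p * Gm j q)) = _
      rw [← Finset.sum_sub_distrib]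
      refine Finset.sum_congr rfl fun l _ => ?_
      rw [← mul_sub, ← Finset.sum_sub_distrib, Finset.mul_sum]
      refine Finset.sum_congr rfl fun i _ => ?_
      rw [← Finset.sum_sub_distrib, Finset.mul_sum]
      refine Finset.sum_congr rfl fun j _ => ?_
      ring
    have hterm : ∀ l i j, ∃ s, Gi m l * ((cc i j l
        - DegTrans.mapSC (algebraMap K (FractionRing (PowerSeries K))) b i j l)
        * Gm i p * Gm j q)
        = algebraMap (PowerSeries K) (FractionRing (PowerSeries K)) (PowerSeries.X * s) := by
      intro l i j
      obtain ⟨r1, hr1⟩ := hGid m l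
      obtain ⟨r2, hr2⟩ := hGmd i p
      obtain ⟨r3, hr3⟩ := hGmd j q
      refine ⟨DegTrans.subPow (3 * M0 + 1) hN (g i j l) * (r1 * r2 * r3), ?_⟩
      rw [hdiff]
      have hXN : (PowerSeries.X : PowerSeries K) ^ (3 * M0 + 1)
          = PowerSeries.X * (PowerSeries.X ^ M0 * PowerSeries.X ^ M0 * PowerSeries.X ^ M0) := by
        rw [← pow_add, ← pow_add, ← pow_succ']
        congr 1
        omega
      calc Gi m l * (algebraMap (PowerSeries K) (FractionRing (PowerSeries K))
            (PowerSeries.X ^ (3 * M0 + 1) * DegTrans.subPow (3 * M0 + 1) hN (g i j l))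
            * Gm i p * Gm j q)
          = (algebraMap (PowerSeries K) (FractionRing (PowerSeries K)) PowerSeries.X
              * algebraMap (PowerSeries K) (FractionRing (PowerSeries K))
                (DegTrans.subPow (3 * M0 + 1) hN (g i j l)))
            * ((algebraMap (PowerSeries K) (FractionRing (PowerSeries K))
                (PowerSeries.X ^ M0) * Gi m l)
              * ((algebraMap (PowerSeries K) (FractionRing (PowerSeries K))
                  (PowerSeries.X ^ M0) * Gm i p)
                * (algebraMap (PowerSeries K) (FractionRing (PowerSeries K))
                    (PowerSeries.X ^ M0) * Gm j q))) := by
            rw [hXN]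
            simp only [_root_.map_mul]
            ring
        _ = algebraMap (PowerSeries K) (FractionRing (PowerSeries K)) PowerSeries.X
              * algebraMap (PowerSeries K) (FractionRing (PowerSeries K))
                (DegTrans.subPow (3 * M0 + 1) hN (g i j l))
              * (algebraMap (PowerSeries K) (FractionRing (PowerSeries K)) r1
                * (algebraMap (PowerSeries K) (FractionRing (PowerSeries K)) r2
                  * algebraMap (PowerSeries K) (FractionRing (PowerSeries K)) r3)) := by
            rw [hr1, hr2, hr3]
        _ = algebraMap (PowerSeries K) (FractionRing (PowerSeries K))
              (PowerSeries.X * (DegTrans.subPow (3 * M0 + 1) hN (g i j l) * (r1 * (r2 * r3)))) := by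
            simp only [_root_.map_mul]
            ring
        _ = _ := by
            congr 1
            ring
    have hsum : ∃ s, (∑ l, ∑ i, ∑ j, Gi m l * ((cc i j l
        - DegTrans.mapSC (algebraMap K (FractionRing (PowerSeries K))) b i j l)
        * Gm i p * Gm j q))
        = algebraMap (PowerSeries K) (FractionRing (PowerSeries K)) (PowerSeries.X * s) := by
      apply DegTrans.exists_sum_X
      intro l _
      apply DegTrans.exists_sum_X
      intro i _
      apply DegTrans.exists_sum_X
      intro j _
      exact hterm l i j
    obtain ⟨s, hs⟩ := hsum
    refine ⟨s, ?_⟩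
    have hfin := hformula.trans hs
    rw [show DegTrans.mapSC (algebraMap (PowerSeries K) (FractionRing (PowerSeries K))) c₁ p q m
      = algebraMap (PowerSeries K) (FractionRing (PowerSeries K)) (c₁ p q m) from rfl] at hfin
    rw [map_add]
    linear_combination hfin
  choose sf hsf using hexist
  set cN : DegTrans.SC (Module.finrank K V) (PowerSeries K) :=
    fun p q m => c₁ p q m + PowerSeries.X * sf p q m with hcN
  have hcNF : DegTrans.mapSC (algebraMap (PowerSeries K) (FractionRing (PowerSeries K))) cN
      = D := by
    funext p q m
    exact (hsf p q m).symm
  -- reduction of cN agrees with that of c₁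
  have hred : DegTrans.mapSC (algebraMap (PowerSeries K) K) cN
      = DegTrans.mapSC (algebraMap (PowerSeries K) K) c₁ := by
    funext p q m
    show PowerSeries.constantCoeff (c₁ p q m + PowerSeries.X * sf p q m)
      = PowerSeries.constantCoeff (c₁ p q m)
    rw [map_add, _root_.map_mul, PowerSeries.constantCoeff_X, zero_mul, add_zero]
  -- associativity of cN
  have hAcc : DegTrans.AssocF cc := by
    have h2 : DegTrans.AssocE c₂ := (DegTrans.assocE_iff_assocF c₂).mpr hA₂
    have h3 := h2.map ((algebraMap (PowerSeries K) (FractionRing (PowerSeries K))).comp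
      (DegTrans.subPow (3 * M0 + 1) hN))
    exact (DegTrans.assocE_iff_assocF _).mp h3
  have hRelDF : DegTrans.RelF Gm D cc := (DegTrans.relE_iff_relF _ _ _).mp hrelD
  have hAD : DegTrans.AssocF D := DegTrans.AssocF.of_relF hGiGm hRelDF hAcc
  have hADF : DegTrans.AssocF
      (DegTrans.mapSC (algebraMap (PowerSeries K) (FractionRing (PowerSeries K))) cN) := by
    rwa [hcNF]
  have hAcN : DegTrans.AssocF cN := by
    intro x y z
    have hinj : Function.Injective
        (algebraMap (PowerSeries K) (FractionRing (PowerSeries K))) :=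
      IsFractionRing.injective _ _
    have e1 : ∀ u v, DegTrans.mulv (DegTrans.mapSC
        (algebraMap (PowerSeries K) (FractionRing (PowerSeries K))) cN)
        ((algebraMap (PowerSeries K) (FractionRing (PowerSeries K))) ∘ u)
        ((algebraMap (PowerSeries K) (FractionRing (PowerSeries K))) ∘ v)
        = (algebraMap (PowerSeries K) (FractionRing (PowerSeries K))) ∘ DegTrans.mulv cN u v :=
      fun u v => DegTrans.mulv_map _ cN u v
    funext l
    apply hinj
    have h4 := congrFun (hADF
      ((algebraMap (PowerSeries K) (FractionRing (PowerSeries K))) ∘ x)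
      ((algebraMap (PowerSeries K) (FractionRing (PowerSeries K))) ∘ y)
      ((algebraMap (PowerSeries K) (FractionRing (PowerSeries K))) ∘ z)) l
    rw [e1 x y, e1 y z, e1 (DegTrans.mulv cN x y) z, e1 x (DegTrans.mulv cN y z)] at h4
    exact h4
  -- the final generic-fibre relation
  have hRelcN : DegTrans.RelF Gm
      (DegTrans.mapSC (algebraMap (PowerSeries K) (FractionRing (PowerSeries K))) cN) cc := by
    rw [hcNF]
    exact hRelDF
  have hRelKm : DegTrans.RelF ((Hm.map (DegTrans.sigma K (3 * M0 + 1) hN)) * Gm)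
      (DegTrans.mapSC (algebraMap (PowerSeries K) (FractionRing (PowerSeries K))) cN)
      (DegTrans.mapSC (algebraMap K (FractionRing (PowerSeries K))) a) :=
    hRelcN.comp hRelHσF
  -- build the final equivalence over the Laurent field
  set Km := (Hm.map (DegTrans.sigma K (3 * M0 + 1) hN)) * Gm with hKm
  set Ki := Gi * (Hi.map (DegTrans.sigma K (3 * M0 + 1) hN)) with hKi
  have hmapmul : ∀ (P Q : Matrix (Fin (Module.finrank K V)) (Fin (Module.finrank K V))
      (FractionRing (PowerSeries K))),
      (P * Q).map (DegTrans.sigma K (3 * M0 + 1) hN)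
        = P.map (DegTrans.sigma K (3 * M0 + 1) hN) * Q.map (DegTrans.sigma K (3 * M0 + 1) hN) :=
    fun P Q => Matrix.map_mul
  have hKmKi : Km * Ki = 1 := by
    rw [hKm, hKi, mul_assoc, ← mul_assoc Gm Gi, hGmGi, one_mul, ← hmapmul, hHmHi]
    exact Matrix.map_one _ (map_zero _) (map_one _)
  have hKiKm : Ki * Km = 1 := by
    rw [hKm, hKi, mul_assoc, ← mul_assoc (Hi.map _) (Hm.map _), ← hmapmul, hHiHm]
    rw [Matrix.map_one _ (map_zero _) (map_one _), one_mul, hGiGm]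
  set Keq : (Fin (Module.finrank K V) → FractionRing (PowerSeries K))
      ≃ₗ[FractionRing (PowerSeries K)]
      (Fin (Module.finrank K V) → FractionRing (PowerSeries K)) :=
    LinearEquiv.ofLinear (Matrix.toLin' Km) (Matrix.toLin' Ki)
      (by rw [← Matrix.toLin'_mul, hKmKi, Matrix.toLin'_one])
      (by rw [← Matrix.toLin'_mul, hKiKm, Matrix.toLin'_one]) with hKeq
  have hKeqv : ∀ z, Keq z = Km *ᵥ z := fun z => rfl
  have hEfin : ∀ x y, (Keq.trans JU) (DegTrans.mulv (DegTrans.mapSC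
      (algebraMap (PowerSeries K) (FractionRing (PowerSeries K))) cN) x y)
      = bcBil K (FractionRing (PowerSeries K)) U A
        ((Keq.trans JU) x) ((Keq.trans JU) y) := by
    intro x y
    simp only [LinearEquiv.trans_apply]
    rw [hKeqv, hKeqv, hKeqv, hRelKm, hJU]
  -- conclude via encode
  refine DegTrans.encode cN hAcN ⟨E₀₁, fun x y => ?_⟩ ⟨Keq.trans JU, hEfin⟩
  rw [hred]
  exact hE₀₁ x y
end
end

section
/- Let K be a field and let P be a chain complex of finitely generated free modules over the power series ring K[[t]]. For any index i, if the i-th homology of the complex P/tP (the complex obtained by reducing each term modulo t, i.e., tensoring with K over K[[t]]) vanishes, then the i-th homology of P vanishes. -/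
/-!
Statement 5: let `P` be a chain complex of finitely generated free `K[[t]]`-modules.
If the homology of `P/tP = P ⊗_{K[[t]]} K` vanishes at some index, then so does the
homology of `P` at that index.  The complex is given by modules `M i` (`i : ℤ`) and
differentials `d i : M i → M (i-1)`; homology at the index `i - 1` vanishes iff
`ker (d (i-1)) ≤ range (d i)`.
-/

open scoped TensorProduct

set_option maxHeartbeats 1000000
set_option synthInstance.maxHeartbeats 1000000

noncomputable section

attribute [local instance] residueAlgebra

theorem aux_exists_smul {K : Type*} [Field K] {N : Type*} [AddCommGroup N]
    [Module (PowerSeries K) N]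
    {ι : Type*} [Fintype ι] (b : Module.Basis ι (PowerSeries K) N) (f : PowerSeries K) (v : N)
    (h : ∀ j, f ∣ b.repr v j) : ∃ u, f • u = v := by
  refine ⟨b.repr.symm (Finsupp.equivFunOnFinite.symm fun j => (h j).choose), ?_⟩
  apply b.repr.injective
  ext j
  rw [map_smul, LinearEquiv.apply_symm_apply]
  simp only [Finsupp.smul_apply, Finsupp.equivFunOnFinite_symm_apply_apply, smul_eq_mul]
  exact congrArg (PowerSeries.coeff _) ((h j).choose_spec).symm

theorem aux_zero {K : Type*} [Field K] {N : Type*} [AddCommGroup N]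
    [Module (PowerSeries K) N]
    {ι : Type*} [Fintype ι] (b : Module.Basis ι (PowerSeries K) N) (v : N)
    (h : ∀ n : ℕ, ∃ u, (PowerSeries.X : PowerSeries K) ^ n • u = v) : v = 0 := by
  have hco : ∀ j, b.repr v j = 0 := by
    intro j
    ext m
    obtain ⟨u, hu⟩ := h (m + 1)
    have : (PowerSeries.X : PowerSeries K) ^ (m+1) ∣ b.repr v j := by
      rw [← hu, map_smul]
      exact Dvd.intro _ rfl
    simpa using (PowerSeries.X_pow_dvd_iff.mp this) m (Nat.lt_succ_self m)
  apply b.repr.injective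
  ext j
  simp [hco j]

theorem homology_vanishing_of_reduction
    (K : Type*) [Field K]
    (M : ℤ → Type*) [∀ i, AddCommGroup (M i)] [∀ i, Module (PowerSeries K) (M i)]
    [∀ i, Module.Free (PowerSeries K) (M i)] [∀ i, Module.Finite (PowerSeries K) (M i)]
    (d : ∀ i : ℤ, M i →ₗ[PowerSeries K] M (i - 1))
    (hdd : ∀ i : ℤ, (d (i - 1)) ∘ₗ (d i) = 0)
    (i : ℤ)
    -- the homology of `P ⊗_{K[[t]]} K = P/tP` at the index `i - 1` vanishes
    (h : LinearMap.ker (LinearMap.baseChange K (d (i - 1)))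
          ≤ LinearMap.range (LinearMap.baseChange K (d i))) :
    -- then the homology of `P` at the index `i - 1` vanishes
    LinearMap.ker (d (i - 1)) ≤ LinearMap.range (d i) := by
  classical
  have hsurj : Function.Surjective (algebraMap (PowerSeries K) K) := fun k =>
    ⟨PowerSeries.C k, PowerSeries.constantCoeff_C k⟩
  -- key approximation step
  have key : ∀ v : LinearMap.ker (d (i-1)), ∃ (y : M i) (z : LinearMap.ker (d (i-1))),
      v.1 = d i y + (PowerSeries.X : PowerSeries K) • z.1 := by
    rintro ⟨x, hx⟩
    have h1 : LinearMap.baseChange K (d (i-1)) ((1:K) ⊗ₜ[PowerSeries K] x) = 0 := by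
      rw [LinearMap.baseChange_tmul, LinearMap.mem_ker.mp hx, TensorProduct.tmul_zero]
    obtain ⟨w, hw⟩ := h h1
    obtain ⟨y, hy⟩ := TensorProduct.mk_surjective (PowerSeries K) (M i) K hsurj w
    have h2 : (1:K) ⊗ₜ[PowerSeries K] (x - d i y) = 0 := by
      rw [TensorProduct.tmul_sub, ← LinearMap.baseChange_tmul (A := K) (f := d i)]
      rw [show (1:K) ⊗ₜ[PowerSeries K] y = w from hy, hw, sub_self]
    have h3 : ∀ j, (PowerSeries.X : PowerSeries K) ∣
        (Module.Free.chooseBasis (PowerSeries K) (M (i-1))).repr (x - d i y) j := by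
      intro j
      rw [PowerSeries.X_dvd_iff]
      have h4 := congrArg
        (fun t => ((Module.Free.chooseBasis (PowerSeries K) (M (i-1))).baseChange K).repr t j) h2
      simp only [Module.Basis.baseChange_repr_tmul, map_zero, Finsupp.coe_zero, Pi.zero_apply] at h4
      rwa [Algebra.smul_def, mul_one] at h4
    obtain ⟨z, hz⟩ := aux_exists_smul _ PowerSeries.X _ h3
    have hzker : z ∈ LinearMap.ker (d (i-1)) := by
      have h5 : (PowerSeries.X : PowerSeries K) • d (i-1) z = 0 := by
        rw [← map_smul, hz, map_sub, LinearMap.mem_ker.mp hx, zero_sub, neg_eq_zero,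
          ← LinearMap.comp_apply, hdd i, LinearMap.zero_apply]
      exact (smul_eq_zero.mp h5).resolve_left PowerSeries.X_ne_zero
    exact ⟨y, ⟨z, hzker⟩, by rw [hz]; abel⟩
  intro x hx
  choose ynext znext hstep using key
  let xs : ℕ → LinearMap.ker (d (i-1)) := fun n => Nat.rec ⟨x, hx⟩ (fun _ v => znext v) n
  let ys : ℕ → M i := fun n => ynext (xs n)
  let s : ℕ → M i := fun n => ∑ k ∈ Finset.range n, (PowerSeries.X : PowerSeries K) ^ k • ys k
  have hxs : ∀ n, xs (n+1) = znext (xs n) := fun n => rfl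
  have hsn : ∀ n, x - d i (s n) = (PowerSeries.X : PowerSeries K) ^ n • (xs n).1 := by
    intro n
    induction n with
    | zero => simp [s, xs]
    | succ n ih =>
      have hs1 : s (n+1) = s n + (PowerSeries.X : PowerSeries K) ^ n • ys n := Finset.sum_range_succ _ _
      have h6 := hstep (xs n)
      rw [hs1, map_add, map_smul]
      calc x - (d i (s n) + (PowerSeries.X : PowerSeries K) ^ n • d i (ys n))
          = (x - d i (s n)) - (PowerSeries.X : PowerSeries K) ^ n • d i (ys n) := by abel
        _ = (PowerSeries.X : PowerSeries K) ^ n • ((xs n).1 - d i (ys n)) := by rw [ih, smul_sub]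
        _ = (PowerSeries.X : PowerSeries K) ^ n • ((PowerSeries.X : PowerSeries K) • (xs (n+1)).1) := by
            rw [hxs n]; rw [show ((xs n).1) = d i (ys n)
              + (PowerSeries.X : PowerSeries K) • (znext (xs n)).1 from h6, add_sub_cancel_left]
        _ = (PowerSeries.X : PowerSeries K) ^ (n+1) • (xs (n+1)).1 := by
            rw [smul_smul, ← pow_succ]
  let bi := Module.Free.chooseBasis (PowerSeries K) (M i)
  let Y : M i := bi.repr.symm (Finsupp.equivFunOnFinite.symm fun j =>
    PowerSeries.mk fun m => PowerSeries.coeff m (bi.repr (s (m+1)) j))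
  have hYs : ∀ n j m, m < n → PowerSeries.coeff m (bi.repr (Y - s n) j) = 0 := by
    intro n j m hm
    have hY : PowerSeries.coeff m (bi.repr Y j)
        = PowerSeries.coeff m (bi.repr (s (m+1)) j) := by
      simp [Y]
    have hsplit : s n = s (m+1) + ∑ k ∈ Finset.Ico (m+1) n, (PowerSeries.X : PowerSeries K) ^ k • ys k := by
      rw [show s n = ∑ k ∈ Finset.range n, (PowerSeries.X : PowerSeries K) ^ k • ys k from rfl,
        ← Finset.sum_range_add_sum_Ico _ hm]
    have hzero : PowerSeries.coeff m
        (bi.repr (∑ k ∈ Finset.Ico (m+1) n, (PowerSeries.X : PowerSeries K) ^ k • ys k) j) = 0 := by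
      rw [map_sum, Finset.sum_apply', map_sum]
      apply Finset.sum_eq_zero
      intro k hk
      rw [map_smul, Finsupp.smul_apply, smul_eq_mul]
      exact PowerSeries.X_pow_dvd_iff.mp (dvd_mul_right _ _) m
        (lt_of_lt_of_le (Nat.lt_succ_self m) (Finset.mem_Ico.mp hk).1)
    rw [map_sub, Finsupp.sub_apply, map_sub, hY, hsplit, map_add, Finsupp.add_apply, map_add,
      hzero, add_zero, sub_self]
  have hYn : ∀ n, ∃ u, (PowerSeries.X : PowerSeries K) ^ n • u = Y - s n := by
    intro n
    apply aux_exists_smul bi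
    intro j
    rw [PowerSeries.X_pow_dvd_iff]
    exact fun m hm => hYs n j m hm
  have hfinal : x - d i Y = 0 := by
    apply aux_zero (Module.Free.chooseBasis (PowerSeries K) (M (i-1)))
    intro n
    obtain ⟨u, hu⟩ := hYn n
    refine ⟨(xs n).1 - d i u, ?_⟩
    rw [smul_sub, ← hsn n, ← map_smul, hu, map_sub]
    abel
  exact ⟨Y, (sub_eq_zero.mp hfinal).symm⟩
end
end

section
/- Let K be a field and let X be an ℕ-graded associative K[[t]]-algebra whose homogeneous components are K[[t]]-submodules and whose underlying K[[t]]-module is free of finite rank. If the quotient algebra X/tX, with its induced grading, is generated as a K-algebra by its homogeneous component of degree 1, then X is generated as a K[[t]]-algebra by its homogeneous component of degree 1. -/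
/-!
Statement 6: let `X` be an ℕ-graded associative unital `K[[t]]`-algebra, free of finite
rank as a `K[[t]]`-module.  If `X/tX = X ⊗_{K[[t]]} K`, with its induced grading, is
generated as a `K`-algebra by its degree-one component, then `X` is generated as a
`K[[t]]`-algebra by its degree-one component.
-/

open scoped TensorProduct

set_option maxHeartbeats 1000000
set_option synthInstance.maxHeartbeats 1000000

noncomputable section

attribute [local instance] residueAlgebra

theorem generated_in_degree_one_of_reduction
    (K : Type*) [Field K]
    (X : Type*) [Ring X] [Algebra (PowerSeries K) X]
    (𝒜 : ℕ → Submodule (PowerSeries K) X) [GradedAlgebra 𝒜]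
    [Module.Free (PowerSeries K) X] [Module.Finite (PowerSeries K) X]
    -- `X/tX = X ⊗_{K[[t]]} K`, with its induced grading, is generated in degree 1
    -- as a `K`-algebra
    (h : Algebra.adjoin K
          (((𝒜 1).baseChange K : Submodule K (K ⊗[PowerSeries K] X)) :
            Set (K ⊗[PowerSeries K] X)) = ⊤) :
    -- then `X` is generated in degree 1 as a `K[[t]]`-algebra
    Algebra.adjoin (PowerSeries K) ((𝒜 1 : Submodule (PowerSeries K) X) : Set X) = ⊤ := by
  set R := PowerSeries K
  set I : Ideal R := RingHom.ker ((PowerSeries.constantCoeff (R := K)))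
  set N : Submodule R X := Subalgebra.toSubmodule (Algebra.adjoin R ((𝒜 1 : Submodule R X) : Set X))
  have hsmul : ∀ (r : R) (k : K), r • k = (PowerSeries.constantCoeff (R := K)) r * k := fun r k => rfl
  -- the map `g : K ⊗ X → X ⧸ I•⊤` splitting things mod I
  let Q := X ⧸ (I • ⊤ : Submodule R X)
  let b : K →ₗ[R] X →ₗ[R] Q :=
    { toFun := fun k =>
        { toFun := fun x => Submodule.mkQ _ (((PowerSeries.C (R := K)) k) • x)
          map_add' := by intro x y; simp [smul_add]
          map_smul' := by
            intro r x
            show Submodule.mkQ _ ((PowerSeries.C (R := K)) k • (r • x)) = r • Submodule.mkQ _ _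
            rw [smul_comm, map_smul] }
      map_add' := by intro k l; ext x; simp [map_add, add_smul]
      map_smul' := by
        intro r k; ext x
        simp only [LinearMap.coe_mk, AddHom.coe_mk, LinearMap.smul_apply, RingHom.id_apply]
        rw [hsmul, ← map_smul, ← sub_eq_zero, ← map_sub, smul_smul, ← sub_smul,
          Submodule.mkQ_apply, Submodule.Quotient.mk_eq_zero]
        refine Submodule.smul_mem_smul ?_ Submodule.mem_top
        simp only [I, RingHom.mem_ker, map_sub, map_mul]
        rw [PowerSeries.constantCoeff_C, sub_self] }
  let g : (K ⊗[R] X) →ₗ[R] Q := TensorProduct.lift b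
  have hg : ∀ x : X, g ((1 : K) ⊗ₜ[R] x) = Submodule.mkQ _ x := by
    intro x
    simp only [g, TensorProduct.lift.tmul, b, LinearMap.coe_mk, AddHom.coe_mk]
    rw [map_one ((PowerSeries.C (R := K))), one_smul]
  -- the algebra hom f : X → K ⊗ X
  let f : X →ₐ[R] K ⊗[R] X := Algebra.TensorProduct.includeRight
  have key : (⊤ : Submodule R X) ≤ N ⊔ I • ⊤ := by
    intro x _
    -- 1 ⊗ x lies in the K-adjoin of the image of 𝒜 1
    have h1 : (1 : K) ⊗ₜ[R] x ∈ Algebra.adjoin K (f '' ((𝒜 1 : Submodule R X) : Set X)) := by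
      have : (1 : K) ⊗ₜ[R] x ∈ Algebra.adjoin K
          (((𝒜 1).baseChange K : Submodule K (K ⊗[R] X)) : Set (K ⊗[R] X)) := h ▸ trivial
      rwa [Submodule.baseChange_eq_span, Algebra.adjoin_span, Submodule.map_coe] at this
    -- K-adjoin ⊆ R-adjoin
    have h2 : (1 : K) ⊗ₜ[R] x ∈ Algebra.adjoin R (f '' ((𝒜 1 : Submodule R X) : Set X)) := by
      refine Algebra.adjoin_induction (fun z hz => Algebra.subset_adjoin hz) ?_
        (fun _ _ _ _ => Subalgebra.add_mem _) (fun _ _ _ _ => Subalgebra.mul_mem _) h1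
      intro k
      have : algebraMap K (K ⊗[R] X) k = algebraMap R (K ⊗[R] X) ((PowerSeries.C (R := K)) k) := by
        rw [IsScalarTower.algebraMap_apply R K (K ⊗[R] X)]
        congr 1
      rw [this]
      exact Subalgebra.algebraMap_mem _ _
    rw [← AlgHom.map_adjoin] at h2
    obtain ⟨y, hy, hfy⟩ := h2
    have hker : x - y ∈ (I • ⊤ : Submodule R X) := by
      have h3 : g ((1:K) ⊗ₜ[R] y) = g ((1:K) ⊗ₜ[R] x) := by rw [← hfy]; rfl
      rw [hg, hg, Submodule.mkQ_apply, Submodule.mkQ_apply] at h3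
      exact (Submodule.Quotient.eq _).mp h3.symm
    have hx : x = y + (x - y) := by abel
    rw [hx]
    exact Submodule.add_mem _ (Submodule.mem_sup_left hy) (Submodule.mem_sup_right hker)
  have hjac : I ≤ Ideal.jacobson ⊥ := by
    rw [IsLocalRing.jacobson_eq_maximalIdeal ⊥ bot_ne_top]
    intro r hr
    rw [IsLocalRing.mem_maximalIdeal, mem_nonunits_iff, PowerSeries.isUnit_iff_constantCoeff]
    simpa using RingHom.mem_ker.mp hr
  have htop : (⊤ : Submodule R X) ≤ N :=
    Submodule.le_of_le_smul_of_le_jacobson_bot Module.Finite.fg_top hjac key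
  rw [eq_top_iff]
  exact fun x _ => htop Submodule.mem_top
end
end

section
/- Let K be a field, let B be a finite-dimensional ℕ-graded associative K-algebra, and let X be a graded K[[t]]-algebra, free of finite rank as a K[[t]]-module, whose homogeneous components are K[[t]]-submodules, together with a degree-zero isomorphism of graded K-algebras X ⊗_{K[[t]]} K ≅ B. Let A be a finite-dimensional ℕ-graded associative K-algebra such that X ⊗_{K[[t]]} K((t)) is isomorphic to A ⊗_K K((t)) as graded K((t))-algebras. If B is generated as a K-algebra by its homogeneous component of degree 1, then A is generated as a K-algebra by its homogeneous component of degree 1. -/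
/-!
Statement 10: if a finite dimensional ℕ-graded algebra `B` is a graded specialization at
`t = 0` of a graded `K[[t]]`-algebra `X` (free of finite rank) which is generically
isomorphic to `A ⊗_K K((t))` as a graded `K((t))`-algebra (`K((t))` being the fraction
field of `K[[t]]`), and `B` is generated in degree 1, then `A` is generated in degree 1.
-/

open scoped TensorProduct

set_option maxHeartbeats 1000000
set_option synthInstance.maxHeartbeats 1000000

noncomputable section

universe u

attribute [local instance] residueAlgebra

section Aux

variable {R C : Type*} [CommRing R] [Ring C] [Algebra R C]

/-- powers of the degree-one piece lie in the graded pieces -/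
lemma pow_le_graded (𝒞 : ℕ → Submodule R C) [GradedAlgebra 𝒞] (i : ℕ) :
    (𝒞 1) ^ i ≤ 𝒞 i := by
  induction i with
  | zero =>
      rw [pow_zero, Submodule.one_eq_span, Submodule.span_le, Set.singleton_subset_iff]
      exact SetLike.one_mem_graded 𝒞
  | succ n ih =>
      rw [pow_succ]
      exact Submodule.mul_le.mpr fun a ha b hb => SetLike.mul_mem_graded (ih ha) hb

lemma pow_le_subalgebra {S : Subalgebra R C} {p : Submodule R C}
    (hp : p ≤ Subalgebra.toSubmodule S) (i : ℕ) :
    p ^ i ≤ Subalgebra.toSubmodule S := by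
  induction i with
  | zero =>
      rw [pow_zero, Submodule.one_eq_span, Submodule.span_le, Set.singleton_subset_iff]
      exact S.one_mem
  | succ n ih =>
      rw [pow_succ]
      exact Submodule.mul_le.mpr fun a ha b hb => S.mul_mem (ih ha) (hp hb)

lemma graded_le_pow_of_adjoin (𝒞 : ℕ → Submodule R C) [GradedAlgebra 𝒞]
    (h : Algebra.adjoin R ((𝒞 1 : Submodule R C) : Set C) = ⊤) (i : ℕ) :
    𝒞 i ≤ (𝒞 1) ^ i := by
  intro c hc
  have hc' : c ∈ Submodule.span R ((Submonoid.closure ((𝒞 1 : Submodule R C) : Set C) : Submonoid C) : Set C) := by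
    rw [← Algebra.adjoin_eq_span]
    show c ∈ Subalgebra.toSubmodule (Algebra.adjoin R ((𝒞 1 : Submodule R C) : Set C))
    rw [h]; trivial
  have key : ∀ x, x ∈ Submodule.span R ((Submonoid.closure ((𝒞 1 : Submodule R C) : Set C) : Submonoid C) : Set C) →
      ((DirectSum.decompose 𝒞 x i : 𝒞 i) : C) ∈ (𝒞 1) ^ i := by
    intro x hx
    refine Submodule.span_induction ?_ ?_ ?_ ?_ hx
    · intro y hy
      -- y in the monoid closure: it lies in some power
      have : ∃ n, y ∈ (𝒞 1) ^ n := by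
        refine Submonoid.closure_induction (fun z hz => ⟨1, by simpa [pow_one] using hz⟩) ⟨0, by
          rw [pow_zero, Submodule.one_eq_span]; exact Submodule.mem_span_singleton_self 1⟩ ?_ hy
        rintro a b _ _ ⟨m, hm⟩ ⟨n, hn⟩
        exact ⟨m + n, by rw [pow_add]; exact Submodule.mul_mem_mul hm hn⟩
      obtain ⟨n, hn⟩ := this
      have hyn : y ∈ 𝒞 n := pow_le_graded 𝒞 n hn
      by_cases hni : n = i
      · subst hni
        rw [DirectSum.decompose_of_mem_same 𝒞 hyn]
        exact hn
      · rw [DirectSum.decompose_of_mem_ne 𝒞 hyn hni]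
        exact Submodule.zero_mem _
    · simp only [DirectSum.decompose_zero, DirectSum.zero_apply, ZeroMemClass.coe_zero]
      exact Submodule.zero_mem _
    · intro a b _ _ ha hb
      rw [DirectSum.decompose_add, DirectSum.add_apply, Submodule.coe_add]
      exact Submodule.add_mem _ ha hb
    · intro r a _ ha
      rw [DirectSum.decompose_smul, DirectSum.smul_apply, Submodule.coe_smul]
      exact Submodule.smul_mem _ _ ha
  have := key c hc'
  rwa [DirectSum.decompose_of_mem_same 𝒞 hc] at this

lemma adjoin_eq_top_of_graded_le_pow (𝒞 : ℕ → Submodule R C) [GradedAlgebra 𝒞]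
    (h : ∀ i, 𝒞 i ≤ (𝒞 1) ^ i) :
    Algebra.adjoin R ((𝒞 1 : Submodule R C) : Set C) = ⊤ := by
  classical
  rw [eq_top_iff]
  intro c _
  have hsum := DirectSum.sum_support_decompose 𝒞 c
  rw [← hsum]
  refine Subalgebra.sum_mem _ fun i _ => ?_
  have h1 : ((DirectSum.decompose 𝒞 c i : 𝒞 i) : C) ∈ (𝒞 1) ^ i :=
    h i (DirectSum.decompose 𝒞 c i).2
  have h2 : (𝒞 1 : Submodule R C) ≤ Subalgebra.toSubmodule
      (Algebra.adjoin R ((𝒞 1 : Submodule R C) : Set C)) := fun x hx =>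
    Algebra.subset_adjoin hx
  exact pow_le_subalgebra h2 i h1

/-- over a surjective base change, every element of `p.baseChange` is a pure tensor `1 ⊗ x` -/
lemma exists_tmul_of_mem_baseChange {R S M : Type*} [CommRing R] [CommRing S] [Algebra R S]
    [AddCommGroup M] [Module R M]
    (hs : Function.Surjective (algebraMap R S))
    (p : Submodule R M) {z : S ⊗[R] M} (hz : z ∈ p.baseChange S) :
    ∃ x ∈ p, (1 : S) ⊗ₜ[R] x = z := by
  rw [Submodule.baseChange_eq_span] at hz
  refine Submodule.span_induction ?_ ?_ ?_ ?_ hz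
  · rintro y ⟨x, hx, rfl⟩
    exact ⟨x, hx, rfl⟩
  · exact ⟨0, Submodule.zero_mem _, TensorProduct.tmul_zero _ _⟩
  · rintro y₁ y₂ _ _ ⟨x₁, hx₁, rfl⟩ ⟨x₂, hx₂, rfl⟩
    exact ⟨x₁ + x₂, Submodule.add_mem _ hx₁ hx₂, TensorProduct.tmul_add _ _ _⟩
  · rintro s y _ ⟨x, hx, rfl⟩
    obtain ⟨r, rfl⟩ := hs s
    refine ⟨r • x, Submodule.smul_mem _ _ hx, ?_⟩
    rw [TensorProduct.tmul_smul, algebraMap_smul]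

/-- descent of membership along a field extension base change -/
lemma mem_of_tmul_mem_baseChange {k L V : Type*} [Field k] [AddCommGroup V] [Module k V]
    [CommRing L] [Nontrivial L] [Algebra k L] (P : Submodule k V) {v : V}
    (h : (1 : L) ⊗ₜ[k] v ∈ P.baseChange L) : v ∈ P := by
  classical
  have hker : P.baseChange L ≤ LinearMap.ker (LinearMap.baseChange L P.mkQ) := by
    rw [Submodule.baseChange_eq_span, Submodule.span_le]
    rintro - ⟨x, hx, rfl⟩
    simp only [SetLike.mem_coe, LinearMap.mem_ker, TensorProduct.mk_apply,
      LinearMap.baseChange_tmul, Submodule.mkQ_apply]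
    rw [(Submodule.Quotient.mk_eq_zero _).mpr hx, TensorProduct.tmul_zero]
  have h0 : (1 : L) ⊗ₜ[k] (Submodule.Quotient.mk v : V ⧸ P) = 0 := by
    have := hker h
    simpa using this
  by_contra hv
  have hq : (Submodule.Quotient.mk v : V ⧸ P) ≠ 0 := by
    simpa [Submodule.Quotient.mk_eq_zero] using hv
  let b := Module.Free.chooseBasis k (V ⧸ P)
  have hrepr : b.repr (Submodule.Quotient.mk v) ≠ 0 := by
    simpa using (b.repr.map_ne_zero_iff).mpr hq
  obtain ⟨j, hj⟩ := Finsupp.ne_iff.mp hrepr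
  have : (b.baseChange L).repr ((1 : L) ⊗ₜ[k] (Submodule.Quotient.mk v : V ⧸ P)) j = 0 := by
    rw [h0]; simp
  rw [Module.Basis.baseChange_repr_tmul, Algebra.smul_def, mul_one] at this
  exact hj (by simpa using ((algebraMap k L).injective) (by simpa using this))

/-- kernel of reduction mod t on a free module -/
lemma eq_X_smul_of_tmul_eq_zero (K : Type u) [Field K] (X : Type u) [AddCommGroup X]
    [Module (PowerSeries K) X] [Module.Free (PowerSeries K) X]
    [Module.Finite (PowerSeries K) X]
    {x : X} (h : (1 : K) ⊗ₜ[PowerSeries K] x = 0) :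
    ∃ y : X, x = (PowerSeries.X : PowerSeries K) • y := by
  classical
  let b := Module.Free.chooseBasis (PowerSeries K) X
  have halg : (algebraMap (PowerSeries K) K) = PowerSeries.constantCoeff (R := K) := rfl
  have hco : ∀ j, PowerSeries.constantCoeff (R := K) (b.repr x j) = 0 := by
    intro j
    have h1 : (b.baseChange K).repr ((1 : K) ⊗ₜ[PowerSeries K] x) j = 0 := by
      rw [h]; simp
    rw [Module.Basis.baseChange_repr_tmul, Algebra.smul_def, mul_one, halg] at h1
    exact h1
  have hdvd : ∀ j, ∃ d, b.repr x j = PowerSeries.X * d := by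
    intro j
    obtain ⟨d, hd⟩ := PowerSeries.X_dvd_iff.mpr (hco j)
    exact ⟨d, hd⟩
  choose d hd using hdvd
  refine ⟨∑ j, d j • b j, ?_⟩
  calc x = ∑ j, b.repr x j • b j := (b.sum_repr x).symm
    _ = ∑ j, PowerSeries.X • (d j • b j) := by
        refine Finset.sum_congr rfl fun j _ => ?_
        rw [hd j, mul_smul]
    _ = PowerSeries.X • ∑ j, d j • b j := (Finset.smul_sum).symm

/-- products of base changes lie in the base change of the product -/
lemma baseChange_mul_le {k L V : Type*} [CommRing k] [Ring V] [Algebra k V]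
    [CommRing L] [Algebra k L] (M N : Submodule k V) :
    M.baseChange L * N.baseChange L ≤ (M * N).baseChange L := by
  rw [Submodule.mul_le]
  intro u hu
  rw [Submodule.baseChange_eq_span] at hu
  refine Submodule.span_induction (p := fun u _ => ∀ v ∈ N.baseChange L, u * v ∈ (M * N).baseChange L)
    ?_ ?_ ?_ ?_ hu
  · rintro - ⟨m, hm, rfl⟩ v hv
    rw [Submodule.baseChange_eq_span] at hv
    refine Submodule.span_induction (p := fun v _ => (TensorProduct.mk k L V 1 m) * v ∈ (M * N).baseChange L)
      ?_ ?_ ?_ ?_ hv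
    · rintro - ⟨n, hn, rfl⟩
      simp only [TensorProduct.mk_apply]
      rw [Algebra.TensorProduct.tmul_mul_tmul, one_mul]
      exact Submodule.tmul_mem_baseChange_of_mem _ (Submodule.mul_mem_mul hm hn)
    · rw [mul_zero]; exact Submodule.zero_mem _
    · intro a c _ _ ha hc
      rw [mul_add]; exact Submodule.add_mem _ ha hc
    · intro s a _ ha
      rw [mul_smul_comm]; exact Submodule.smul_mem _ _ ha
  · intro v _; rw [zero_mul]; exact Submodule.zero_mem _
  · intro a c _ _ ha hc v hv
    rw [add_mul]; exact Submodule.add_mem _ (ha v hv) (hc v hv)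
  · intro s a _ ha v hv
    rw [smul_mul_assoc]; exact Submodule.smul_mem _ _ (ha v hv)

end Aux

lemma baseChange_pow_le {k L V : Type*} [CommRing k] [Ring V] [Algebra k V]
    [CommRing L] [Algebra k L] (M : Submodule k V) (n : ℕ) :
    (M.baseChange L) ^ n ≤ (M ^ n).baseChange L := by
  induction n with
  | zero =>
      rw [pow_zero, pow_zero]
      intro u hu
      obtain ⟨c, hc⟩ := Submodule.mem_one.mp hu
      have h1 : algebraMap L (L ⊗[k] V) c = c ⊗ₜ[k] (1 : V) := rfl
      rw [← hc, h1]
      exact Submodule.tmul_mem_baseChange_of_mem c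
        (Submodule.mem_one.mpr ⟨1, map_one (algebraMap k V)⟩)
  | succ m ih =>
      rw [pow_succ, pow_succ]
      calc (M.baseChange L) ^ m * M.baseChange L
          ≤ (M ^ m).baseChange L * M.baseChange L := mul_le_mul' ih le_rfl
        _ ≤ (M ^ m * M).baseChange L := baseChange_mul_le _ _


theorem generated_in_degree_one_of_degeneration
    (K : Type u) [Field K]
    -- `A`, `B`: finite dimensional ℕ-graded associative unital `K`-algebras
    (A : Type u) [Ring A] [Algebra K A] [Module.Finite K A]
    (𝒜 : ℕ → Submodule K A) [GradedAlgebra 𝒜]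
    (B : Type u) [Ring B] [Algebra K B] [Module.Finite K B]
    (ℬ : ℕ → Submodule K B) [GradedAlgebra ℬ]
    -- `X`: a graded `K[[t]]`-algebra, free of finite rank as a `K[[t]]`-module
    (X : Type u) [Ring X] [Algebra (PowerSeries K) X]
    (𝒳 : ℕ → Submodule (PowerSeries K) X) [GradedAlgebra 𝒳]
    [Module.Free (PowerSeries K) X] [Module.Finite (PowerSeries K) X]
    -- a degree-zero isomorphism of graded `K`-algebras `X ⊗_{K[[t]]} K ≅ B`
    (e₀ : (K ⊗[PowerSeries K] X) ≃ₐ[K] B)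
    (he₀ : ∀ (i : ℕ) (x : K ⊗[PowerSeries K] X), x ∈ (𝒳 i).baseChange K → e₀ x ∈ ℬ i)
    (he₀' : ∀ (i : ℕ) (y : B), y ∈ ℬ i → e₀.symm y ∈ (𝒳 i).baseChange K)
    -- an isomorphism of graded `K((t))`-algebras `X ⊗_{K[[t]]} K((t)) ≅ A ⊗_K K((t))`
    (e : (FractionRing (PowerSeries K) ⊗[PowerSeries K] X)
          ≃ₐ[FractionRing (PowerSeries K)] (FractionRing (PowerSeries K) ⊗[K] A))
    (he : ∀ (i : ℕ) (x : FractionRing (PowerSeries K) ⊗[PowerSeries K] X),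
      x ∈ (𝒳 i).baseChange (FractionRing (PowerSeries K)) →
        e x ∈ (𝒜 i).baseChange (FractionRing (PowerSeries K)))
    (he' : ∀ (i : ℕ) (y : FractionRing (PowerSeries K) ⊗[K] A),
      y ∈ (𝒜 i).baseChange (FractionRing (PowerSeries K)) →
        e.symm y ∈ (𝒳 i).baseChange (FractionRing (PowerSeries K)))
    -- `B` is generated in degree 1 as a `K`-algebra
    (hB : Algebra.adjoin K ((ℬ 1 : Submodule K B) : Set B) = ⊤) :
    -- then `A` is generated in degree 1 as a `K`-algebra
    Algebra.adjoin K ((𝒜 1 : Submodule K A) : Set A) = ⊤ := by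
  classical
  have halg : (algebraMap (PowerSeries K) K) = ↑(PowerSeries.constantCoeff (R := K)) := rfl
  -- Step A : components of B are contained in powers of degree one part
  have hBpow : ∀ i, ℬ i ≤ (ℬ 1) ^ i := graded_le_pow_of_adjoin ℬ hB
  have hKsurj : Function.Surjective (algebraMap (PowerSeries K) K) := fun c =>
    ⟨PowerSeries.C c, by rw [halg]; exact PowerSeries.constantCoeff_C c⟩
  -- moving a `C c` scalar across the tensor
  have htsmul : ∀ (c : K) (x : X),
      (1 : K) ⊗ₜ[PowerSeries K] ((PowerSeries.C c) • x)
        = c • ((1 : K) ⊗ₜ[PowerSeries K] x) := by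
    intro c x
    rw [TensorProduct.tmul_smul, TensorProduct.smul_tmul', Algebra.smul_def, mul_one, halg,
      PowerSeries.constantCoeff_C, TensorProduct.smul_tmul', smul_eq_mul, mul_one]
  have hmulK : ∀ x y : X, (1 : K) ⊗ₜ[PowerSeries K] (x * y)
      = ((1 : K) ⊗ₜ[PowerSeries K] x) * ((1 : K) ⊗ₜ[PowerSeries K] y) := by
    intro x y
    rw [Algebra.TensorProduct.tmul_mul_tmul, one_mul]
  -- surjectivity of the reduction onto graded components
  have hsurj : ∀ i, ∀ y ∈ ℬ i, ∃ x ∈ 𝒳 i,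
      e₀ ((1 : K) ⊗ₜ[PowerSeries K] x) = y := by
    intro i y hy
    obtain ⟨x, hx, hxz⟩ := exists_tmul_of_mem_baseChange hKsurj (𝒳 i) (he₀' i y hy)
    exact ⟨x, hx, by rw [hxz, AlgEquiv.apply_symm_apply]⟩
  -- lifting powers of the degree-one component
  have hTlift : ∀ i, ∀ y ∈ ((ℬ 1 : Submodule K B) ^ i),
      ∃ x ∈ ((𝒳 1 : Submodule (PowerSeries K) X) ^ i),
        e₀ ((1 : K) ⊗ₜ[PowerSeries K] x) = y := by
    intro i
    induction i with
    | zero =>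
        intro y hy
        rw [pow_zero] at hy
        obtain ⟨c, hc⟩ := Submodule.mem_one.mp hy
        refine ⟨algebraMap (PowerSeries K) X (PowerSeries.C c), ?_, ?_⟩
        · rw [pow_zero]
          exact Submodule.mem_one.mpr ⟨PowerSeries.C c, rfl⟩
        · rw [Algebra.algebraMap_eq_smul_one, htsmul]
          rw [show ((1:K) ⊗ₜ[PowerSeries K] (1:X)) = (1 : K ⊗[PowerSeries K] X) from rfl]
          rw [map_smul, map_one, ← Algebra.algebraMap_eq_smul_one, hc]
    | succ n ih =>
        intro y hy
        rw [pow_succ] at hy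
        refine Submodule.mul_induction_on hy ?_ ?_
        · intro a ha b hb
          obtain ⟨xa, hxa, hea⟩ := ih a ha
          obtain ⟨xb, hxb, heb⟩ := hsurj 1 b hb
          refine ⟨xa * xb, ?_, ?_⟩
          · rw [pow_succ]
            exact Submodule.mul_mem_mul hxa hxb
          · rw [hmulK, map_mul, hea, heb]
        · rintro u v ⟨xu, hxu, hu⟩ ⟨xv, hxv, hv⟩
          exact ⟨xu + xv, Submodule.add_mem _ hxu hxv, by
            rw [TensorProduct.tmul_add, map_add, hu, hv]⟩
  -- Step B : Nakayama, components of X are powers of the degree one part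
  have hjac : Ideal.span {(PowerSeries.X : PowerSeries K)} ≤ Ideal.jacobson ⊥ := by
    rw [IsLocalRing.jacobson_eq_maximalIdeal ⊥ bot_ne_top,
      ← PowerSeries.maximalIdeal_eq_span_X]
  have hXile : ∀ i, 𝒳 i ≤ (𝒳 1) ^ i := by
    intro i
    have hfg : (𝒳 i).FG := IsNoetherian.noetherian _
    refine Submodule.le_of_le_smul_of_le_jacobson_bot hfg hjac ?_
    intro x hx
    have h1 : e₀ ((1 : K) ⊗ₜ[PowerSeries K] x) ∈ ℬ i :=
      he₀ i _ (Submodule.tmul_mem_baseChange_of_mem 1 hx)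
    obtain ⟨y, hy1, hy2⟩ := hTlift i _ (hBpow i h1)
    have hz0 : (1 : K) ⊗ₜ[PowerSeries K] (x - y) = 0 := by
      have : e₀ ((1 : K) ⊗ₜ[PowerSeries K] x) = e₀ ((1 : K) ⊗ₜ[PowerSeries K] y) := by
        rw [hy2]
      have h2 : (1 : K) ⊗ₜ[PowerSeries K] x = (1 : K) ⊗ₜ[PowerSeries K] y :=
        e₀.injective this
      rw [TensorProduct.tmul_sub, h2, sub_self]
    obtain ⟨z, hz⟩ := eq_X_smul_of_tmul_eq_zero K X hz0
    have hxy𝒳 : x - y ∈ 𝒳 i := Submodule.sub_mem _ hx (pow_le_graded 𝒳 i hy1)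
    have hproj : x - y = (PowerSeries.X : PowerSeries K) •
        ((DirectSum.decompose 𝒳 z i : 𝒳 i) : X) := by
      calc x - y = ((DirectSum.decompose 𝒳 (x - y) i : 𝒳 i) : X) :=
            (DirectSum.decompose_of_mem_same 𝒳 hxy𝒳).symm
        _ = ((DirectSum.decompose 𝒳 ((PowerSeries.X : PowerSeries K) • z) i : 𝒳 i) : X) := by
            rw [← hz]
        _ = (((PowerSeries.X : PowerSeries K) • DirectSum.decompose 𝒳 z) i : X) := by
            rw [DirectSum.decompose_smul]
        _ = (PowerSeries.X : PowerSeries K) • ((DirectSum.decompose 𝒳 z i : 𝒳 i) : X) := by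
            rw [DirectSum.smul_apply]
            rfl
    have hmem : x - y ∈ Ideal.span {(PowerSeries.X : PowerSeries K)} • 𝒳 i := by
      rw [hproj]
      exact Submodule.smul_mem_smul (Ideal.mem_span_singleton_self _)
        (DirectSum.decompose 𝒳 z i).2
    exact Submodule.mem_sup.mpr ⟨y, hy1, x - y, hmem, by abel⟩
  -- Step C : transfer to A over the fraction field
  have htsmulF : ∀ (r : PowerSeries K) (x : X),
      (1 : FractionRing (PowerSeries K)) ⊗ₜ[PowerSeries K] (r • x)
        = (algebraMap (PowerSeries K) (FractionRing (PowerSeries K)) r)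
            • ((1 : FractionRing (PowerSeries K)) ⊗ₜ[PowerSeries K] x) := by
    intro r x
    rw [TensorProduct.tmul_smul, TensorProduct.smul_tmul', Algebra.smul_def, mul_one,
      TensorProduct.smul_tmul', smul_eq_mul, mul_one]
  have hmulF : ∀ x y : X,
      (1 : FractionRing (PowerSeries K)) ⊗ₜ[PowerSeries K] (x * y)
        = ((1 : FractionRing (PowerSeries K)) ⊗ₜ[PowerSeries K] x)
            * ((1 : FractionRing (PowerSeries K)) ⊗ₜ[PowerSeries K] y) := by
    intro x y
    rw [Algebra.TensorProduct.tmul_mul_tmul, one_mul]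
  have hpowim : ∀ n, ∀ x ∈ ((𝒳 1 : Submodule (PowerSeries K) X) ^ n),
      e ((1 : FractionRing (PowerSeries K)) ⊗ₜ[PowerSeries K] x)
        ∈ ((𝒜 1).baseChange (FractionRing (PowerSeries K))) ^ n := by
    intro n
    induction n with
    | zero =>
        intro x hx
        rw [pow_zero] at hx ⊢
        obtain ⟨r, hr⟩ := Submodule.mem_one.mp hx
        rw [← hr, Algebra.algebraMap_eq_smul_one, htsmulF]
        rw [show ((1 : FractionRing (PowerSeries K)) ⊗ₜ[PowerSeries K] (1 : X))
          = (1 : FractionRing (PowerSeries K) ⊗[PowerSeries K] X) from rfl]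
        rw [map_smul, map_one]
        refine Submodule.mem_one.mpr
          ⟨algebraMap (PowerSeries K) (FractionRing (PowerSeries K)) r, ?_⟩
        exact Algebra.algebraMap_eq_smul_one
          (algebraMap (PowerSeries K) (FractionRing (PowerSeries K)) r)
    | succ m ih =>
        intro x hx
        rw [pow_succ] at hx
        rw [pow_succ]
        refine Submodule.mul_induction_on hx ?_ ?_
        · intro a ha b hb
          rw [hmulF, map_mul]
          exact Submodule.mul_mem_mul (ih a ha)
            (he 1 _ (Submodule.tmul_mem_baseChange_of_mem 1 hb))
        · intro u v hu hv
          rw [TensorProduct.tmul_add, map_add]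
          exact Submodule.add_mem _ hu hv
  have hApow : ∀ i, 𝒜 i ≤ (𝒜 1) ^ i := by
    intro i a ha
    have h1 : e.symm ((1 : FractionRing (PowerSeries K)) ⊗ₜ[K] a)
        ∈ (𝒳 i).baseChange (FractionRing (PowerSeries K)) :=
      he' i _ (Submodule.tmul_mem_baseChange_of_mem 1 ha)
    have hbc : ∀ w ∈ (𝒳 i).baseChange (FractionRing (PowerSeries K)),
        e w ∈ ((𝒜 1).baseChange (FractionRing (PowerSeries K))) ^ i := by
      intro w hw
      rw [Submodule.baseChange_eq_span] at hw
      refine Submodule.span_induction ?_ ?_ ?_ ?_ hw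
      · rintro - ⟨x, hx, rfl⟩
        exact hpowim i x (hXile i hx)
      · rw [map_zero]; exact Submodule.zero_mem _
      · intro u v _ _ hu hv
        rw [map_add]; exact Submodule.add_mem _ hu hv
      · intro c u _ hu
        rw [map_smul]; exact Submodule.smul_mem _ _ hu
    have h2 : (1 : FractionRing (PowerSeries K)) ⊗ₜ[K] a
        ∈ ((𝒜 1).baseChange (FractionRing (PowerSeries K))) ^ i := by
      have := hbc _ h1
      rwa [AlgEquiv.apply_symm_apply] at this
    have h3 : (1 : FractionRing (PowerSeries K)) ⊗ₜ[K] a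
        ∈ ((𝒜 1 : Submodule K A) ^ i).baseChange (FractionRing (PowerSeries K)) :=
      baseChange_pow_le _ i h2
    exact mem_of_tmul_mem_baseChange _ h3
  exact adjoin_eq_top_of_graded_le_pow 𝒜 hApow

end
end
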